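/- arXiv:math/0201136 — 3 statements merged into one kernel-verified Lean document; each statement's English description precedes it below -/
import Mathlib

section
/- The number of involutions of length n avoiding 132 and having exactly p fixed points (where p ≡ n mod 2 and 0 ≤ p ≤ n) equals the ballot number C(n,(n+p)/2) − C(n,(n+p)/2 + 1). -/
def bal (m q : ℕ) : ℕ :=
  if q ≤ m ∧ q % 2 = m % 2 then Nat.choose m ((m+q)/2) - Nat.choose m ((m+q)/2+1) else 0

lemma choose_anti {m j : ℕ} (h : m ≤ 2*j) : Nat.choose m (j+1) ≤ Nat.choose m j := by
  rcases lt_or_ge m (j+1) with hlt | hle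
  · simp [Nat.choose_eq_zero_of_lt hlt]
  · have h1 := Nat.choose_succ_right_eq m j
    have h2 : Nat.choose m j * (m - j) ≤ Nat.choose m j * (j+1) :=
      Nat.mul_le_mul_left _ (by omega)
    have h3 : Nat.choose m (j+1) * (j+1) ≤ Nat.choose m j * (j+1) := by omega
    exact Nat.le_of_mul_le_mul_right h3 (by omega)

lemma bal_eq_zero_of_lt {m q : ℕ} (h : m < q) : bal m q = 0 := by
  rw [bal, if_neg]; omega

lemma bal_eq_zero_of_parity {m q : ℕ} (h : q % 2 ≠ m % 2) : bal m q = 0 := by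
  rw [bal, if_neg]; omega

lemma bal_succ_zero (m : ℕ) : bal (m+1) 0 = bal m 1 := by
  rcases Nat.even_or_odd m with he | ho
  · have hm : m % 2 = 0 := Nat.even_iff.mp he
    rw [bal_eq_zero_of_parity (by omega : (0:ℕ) % 2 ≠ (m+1) % 2),
      bal_eq_zero_of_parity (by omega : (1:ℕ) % 2 ≠ m % 2)]
  · have hm : m % 2 = 1 := Nat.odd_iff.mp ho
    obtain ⟨h, rfl⟩ : ∃ h, m = 2*h+1 := ⟨m/2, by omega⟩
    rw [bal, bal, if_pos (by omega), if_pos (by omega)]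
    have e1 : (2*h+1+1+0)/2 = h+1 := by omega
    rw [e1]
    have p1 : (2*h+1+1).choose (h+1) = (2*h+1).choose h + (2*h+1).choose (h+1) :=
      Nat.choose_succ_succ (2*h+1) h
    have p2 : (2*h+1+1).choose (h+1+1) = (2*h+1).choose (h+1) + (2*h+1).choose (h+1+1) :=
      Nat.choose_succ_succ (2*h+1) (h+1)
    have hs : Nat.choose (2*h+1) h = Nat.choose (2*h+1) (h+1) := by
      rw [← Nat.choose_symm (by omega : h+1 ≤ 2*h+1)]
      congr 1; omega
    omega

lemma bal_succ_succ (m q : ℕ) : bal (m+1) (q+1) = bal m q + bal m (q+2) := by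
  rcases Nat.decEq (q % 2) (m % 2) with hp | hp
  · rw [bal_eq_zero_of_parity (by omega), bal_eq_zero_of_parity (by omega),
      bal_eq_zero_of_parity (by omega)]
  · rcases lt_or_ge m q with hlt | hle
    · rw [bal_eq_zero_of_lt (by omega), bal_eq_zero_of_lt (by omega),
        bal_eq_zero_of_lt (by omega)]
    · obtain ⟨j, hj⟩ : ∃ j, m + q = 2*j := ⟨(m+q)/2, by omega⟩
      have hmj : m ≤ 2*j := by omega
      have hL : bal (m+1) (q+1) = Nat.choose (m+1) (j+1) - Nat.choose (m+1) (j+2) := by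
        rw [bal, if_pos (by omega)]
        have e : (m+1+(q+1))/2 = j+1 := by omega
        rw [e]
      have hR1 : bal m q = Nat.choose m j - Nat.choose m (j+1) := by
        rw [bal, if_pos (by omega)]
        have e : (m+q)/2 = j := by omega
        rw [e]
      have hR2 : bal m (q+2) = Nat.choose m (j+1) - Nat.choose m (j+2) := by
        rcases le_or_gt (q+2) m with hle2 | hlt2
        · rw [bal, if_pos (by omega)]
          have e : (m+(q+2))/2 = j+1 := by omega
          rw [e]
        · have hjm : j = m := by omega
          rw [bal_eq_zero_of_lt (by omega), hjm,
            Nat.choose_eq_zero_of_lt (by omega), Nat.choose_eq_zero_of_lt (by omega)]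
      have p1 : (m+1).choose (j+1) = m.choose j + m.choose (j+1) := Nat.choose_succ_succ m j
      have p2 : (m+1).choose (j+2) = m.choose (j+1) + m.choose (j+2) :=
        Nat.choose_succ_succ m (j+1)
      have a2 : Nat.choose m (j+2) ≤ Nat.choose m (j+1) :=
        choose_anti (show m ≤ 2*(j+1) by omega)
      have a1 : Nat.choose m (j+1) ≤ Nat.choose m j := choose_anti hmj
      omega

lemma bal_sum : ∀ m q : ℕ,
    bal m (q+1) = ∑ t ∈ Finset.range ((m+1)/2), bal (2*t) 0 * bal (m-1-2*t) q := by
  intro m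
  induction m using Nat.strong_induction_on with
  | _ m IH =>
  intro q
  rcases Nat.eq_zero_or_pos m with rfl | hm
  · simp [bal_eq_zero_of_lt]
  obtain ⟨m, rfl⟩ : ∃ m', m = m'+1 := ⟨m-1, by omega⟩
  rcases q with _ | q'
  · -- q = 0
    rcases Nat.even_or_odd m with he | ho
    · have hm2 : m % 2 = 0 := Nat.even_iff.mp he
      obtain ⟨a, rfl⟩ : ∃ a, m = 2*a := ⟨m/2, by omega⟩
      have hr : (2*a+1+1)/2 = a+1 := by omega
      rw [hr, Finset.sum_range_succ]
      have hterm : bal (2*a) 0 * bal (2*a+1-1 - 2*a) 0 = bal (2*a) 0 := by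
        rw [show 2*a+1-1 - 2*a = 0 from by omega]
        have : bal 0 0 = 1 := by rw [bal, if_pos (by omega)]; simp
        rw [this, mul_one]
      have hrest : ∀ t ∈ Finset.range a,
          bal (2*t) 0 * bal (2*a+1-1-2*t) 0 = bal (2*t) 0 * bal (2*a-1-2*t) 1 := by
        intro t ht
        simp only [Finset.mem_range] at ht
        rw [show 2*a+1-1-2*t = (2*a-1-2*t)+1 from by omega, bal_succ_zero]
      rw [Finset.sum_congr rfl hrest]
      have hS := IH (2*a) (by omega) 1
      rw [show (2*a+1)/2 = a from by omega] at hS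
      rw [hterm, ← hS, bal_succ_succ (2*a) 0]
      have e22 : bal (2*a) (0+2) = bal (2*a) (1+1) := by norm_num
      rw [e22]
      exact add_comm _ _
    · have hm2 : m % 2 = 1 := Nat.odd_iff.mp ho
      rw [bal_eq_zero_of_parity (by omega)]
      symm
      apply Finset.sum_eq_zero
      intro t ht
      simp only [Finset.mem_range] at ht
      have ht2 : 2*t + 2 ≤ m + 1 := by omega
      rw [bal_eq_zero_of_parity (show (0:ℕ)%2 ≠ (m+1-1-2*t)%2 by omega)]
      ring
  · -- q = q'+1
    have hstep : ∑ t ∈ Finset.range ((m+1+1)/2), bal (2*t) 0 * bal (m+1-1-2*t) (q'+1)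
        = ∑ t ∈ Finset.range ((m+1)/2), bal (2*t) 0 * bal (m-2*t) (q'+1) := by
      rcases Nat.even_or_odd m with he | ho
      · have hm2 : m % 2 = 0 := Nat.even_iff.mp he
        obtain ⟨a, rfl⟩ : ∃ a, m = 2*a := ⟨m/2, by omega⟩
        rw [show (2*a+1+1)/2 = a+1 from by omega, show (2*a+1)/2 = a from by omega,
          Finset.sum_range_succ]
        have hz : bal (2*a+1-1-2*a) (q'+1) = 0 := by
          rw [show 2*a+1-1-2*a = 0 from by omega]; exact bal_eq_zero_of_lt (by omega)
        rw [hz, mul_zero, add_zero]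
        rfl
      · have hm2 : m % 2 = 1 := Nat.odd_iff.mp ho
        rw [show (m+1+1)/2 = (m+1)/2 from by omega]
        rfl
    rw [hstep]
    have hexp : ∀ t ∈ Finset.range ((m+1)/2),
        bal (2*t) 0 * bal (m-2*t) (q'+1)
          = bal (2*t) 0 * bal (m-1-2*t) q' + bal (2*t) 0 * bal (m-1-2*t) (q'+2) := by
      intro t ht
      simp only [Finset.mem_range] at ht
      have h1 : 2*t + 1 ≤ m := by omega
      rw [show m - 2*t = (m-1-2*t)+1 from by omega, bal_succ_succ]
      ring
    rw [Finset.sum_congr rfl hexp, Finset.sum_add_distrib,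
      ← IH m (by omega) q', ← IH m (by omega) (q'+2), bal_succ_succ]

lemma bal_main (m p : ℕ) :
    bal (m+1) p = (match p with | 0 => 0 | p'+1 => bal m p')
      + ∑ t ∈ Finset.range ((m+1)/2), bal (2*t) 0 * bal (m-1-2*t) p := by
  match p with
  | 0 =>
    show bal (m+1) 0 = 0 + _
    rw [← bal_sum m 0, bal_succ_zero, zero_add]
  | p'+1 =>
    show bal (m+1) (p'+1) = bal m p' + _
    rw [← bal_sum m (p'+1), bal_succ_succ]

def IsInvolution {n : ℕ} (π : Equiv.Perm (Fin n)) : Prop := ∀ i, π (π i) = i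

def Avoids132 {n : ℕ} (π : Equiv.Perm (Fin n)) : Prop :=
  ¬ ∃ i j k : Fin n, i < j ∧ j < k ∧ π i < π k ∧ π k < π j

def fixCount {n : ℕ} (π : Equiv.Perm (Fin n)) : ℕ :=
  (Finset.univ.filter fun i => π i = i).card

instance {n : ℕ} (π : Equiv.Perm (Fin n)) : Decidable (IsInvolution π) :=
  inferInstanceAs (Decidable (∀ i, π (π i) = i))

instance {n : ℕ} (π : Equiv.Perm (Fin n)) : Decidable (Avoids132 π) :=
  inferInstanceAs (Decidable (¬ ∃ i j k : Fin n, i < j ∧ j < k ∧ π i < π k ∧ π k < π j))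

open Finset Equiv

lemma avoids_symm {n : ℕ} {β : Equiv.Perm (Fin n)} (h : Avoids132 β) : Avoids132 β.symm := by
  rintro ⟨i, j, k, hij, hjk, h1, h2⟩
  exact h ⟨β.symm i, β.symm k, β.symm j, h1, h2, by
    simp only [Equiv.apply_symm_apply]; exact hij, by
    simp only [Equiv.apply_symm_apply]; exact hjk⟩

/-- build a permutation from an injective self-map of `Fin n` -/
noncomputable def mkPerm {n : ℕ} (f : Fin n → Fin n) (hf : Function.Injective f) : Equiv.Perm (Fin n) :=
  Equiv.ofBijective f (Finite.injective_iff_bijective.mp hf)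

@[simp] lemma mkPerm_apply {n : ℕ} (f : Fin n → Fin n) (hf : Function.Injective f)
    (i : Fin n) : mkPerm f hf i = f i := rfl

/-! ### extension at the last point -/

def efun {n : ℕ} (σ : Equiv.Perm (Fin n)) (i : Fin (n+1)) : Fin (n+1) :=
  if h : (i : ℕ) < n then ⟨σ ⟨i, h⟩, lt_trans (σ ⟨i, h⟩).isLt (Nat.lt_succ_self n)⟩ else i

lemma efun_lt {n : ℕ} (σ : Equiv.Perm (Fin n)) {i : Fin (n+1)} (h : (i:ℕ) < n) :
    (efun σ i : ℕ) = σ ⟨i, h⟩ := by rw [efun, dif_pos h]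

lemma efun_last {n : ℕ} (σ : Equiv.Perm (Fin n)) {i : Fin (n+1)} (h : ¬ (i:ℕ) < n) :
    efun σ i = i := by rw [efun, dif_neg h]

lemma efun_inj {n : ℕ} (σ : Equiv.Perm (Fin n)) : Function.Injective (efun σ) := by
  intro a b hab
  by_cases ha : (a:ℕ) < n <;> by_cases hb : (b:ℕ) < n
  · have h1 := efun_lt σ ha
    have h2 := efun_lt σ hb
    rw [hab] at h1
    have h5 : σ ⟨a, ha⟩ = σ ⟨b, hb⟩ := Fin.ext (by omega)
    have h6 := σ.injective h5
    have h7 : (a:ℕ) = b := by simpa using congrArg Fin.val h6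
    exact Fin.ext h7
  · exfalso
    have h1 := efun_lt σ ha
    have h2 := efun_last σ hb
    rw [hab, h2] at h1
    have := (σ ⟨a, ha⟩).isLt
    omega
  · exfalso
    have h1 := efun_last σ ha
    have h2 := efun_lt σ hb
    rw [← hab, h1] at h2
    have := (σ ⟨b, hb⟩).isLt
    omega
  · rw [efun_last σ ha, efun_last σ hb] at hab
    exact hab

noncomputable def eperm {n : ℕ} (σ : Equiv.Perm (Fin n)) : Equiv.Perm (Fin (n+1)) :=
  mkPerm (efun σ) (efun_inj σ)

lemma eperm_lt {n : ℕ} (σ : Equiv.Perm (Fin n)) {i : Fin (n+1)} (h : (i:ℕ) < n) :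
    (eperm σ i : ℕ) = σ ⟨i, h⟩ := efun_lt σ h

lemma eperm_last {n : ℕ} (σ : Equiv.Perm (Fin n)) {i : Fin (n+1)} (h : ¬ (i:ℕ) < n) :
    eperm σ i = i := efun_last σ h

lemma eperm_inv {n : ℕ} (σ : Equiv.Perm (Fin n)) (hσ : IsInvolution σ) :
    IsInvolution (eperm σ) := by
  intro i
  by_cases h : (i:ℕ) < n
  · have h1 : (eperm σ i : ℕ) = σ ⟨i, h⟩ := eperm_lt σ h
    have h2 : (eperm σ i : ℕ) < n := by rw [h1]; exact (σ ⟨i,h⟩).isLt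
    apply Fin.ext
    rw [eperm_lt σ h2]
    have h3 : (⟨(eperm σ i : ℕ), h2⟩ : Fin n) = σ ⟨i, h⟩ := Fin.ext h1
    rw [h3]
    exact congrArg Fin.val (hσ ⟨i, h⟩)
  · rw [eperm_last σ h, eperm_last σ h]

lemma eperm_av {n : ℕ} (σ : Equiv.Perm (Fin n)) (hσ : Avoids132 σ) :
    Avoids132 (eperm σ) := by
  rintro ⟨i, j, k, hij, hjk, h1, h2⟩
  by_cases hk : (k:ℕ) < n
  · have hj : (j:ℕ) < n := lt_trans hjk hk
    have hi : (i:ℕ) < n := lt_trans hij hj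
    apply hσ
    refine ⟨⟨i, hi⟩, ⟨j, hj⟩, ⟨k, hk⟩, hij, hjk, ?_, ?_⟩
    · have e1 := eperm_lt σ hi; have e2 := eperm_lt σ hk
      simp only [Fin.lt_def] at h1 ⊢; omega
    · have e1 := eperm_lt σ hj; have e2 := eperm_lt σ hk
      simp only [Fin.lt_def] at h2 ⊢; omega
  · have hkl : eperm σ k = k := eperm_last σ hk
    have hjlt : (eperm σ j : ℕ) < n + 1 := (eperm σ j).isLt
    have hk2 := k.isLt
    simp only [Fin.lt_def, hkl] at h2
    have := eperm_lt σ (show (j:ℕ) < n from lt_of_lt_of_le hjk (by omega))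
    omega

lemma eperm_fix {n : ℕ} (σ : Equiv.Perm (Fin n)) : fixCount (eperm σ) = fixCount σ + 1 := by
  rw [fixCount, fixCount]
  have hins : (univ.filter fun i : Fin (n+1) => eperm σ i = i) =
      insert ⟨n, Nat.lt_succ_self n⟩
        ((univ.filter fun i : Fin n => σ i = i).image
          (fun i : Fin n => (⟨i, lt_trans i.isLt (Nat.lt_succ_self n)⟩ : Fin (n+1)))) := by
    ext x
    simp only [mem_filter, mem_univ, true_and, mem_insert, Finset.mem_image]
    constructor
    · intro hx
      by_cases h : (x:ℕ) < n
      · right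
        refine ⟨⟨x, h⟩, ?_, Fin.ext rfl⟩
        have h1 := eperm_lt σ h
        rw [hx] at h1
        exact Fin.ext h1.symm
      · left; exact Fin.ext (show (x:ℕ) = n by omega)
    · rintro (rfl | ⟨y, hy, rfl⟩)
      · exact eperm_last σ (by simp)
      · apply Fin.ext
        have h1 := eperm_lt σ (show ((⟨(y:ℕ), lt_trans y.isLt (Nat.lt_succ_self n)⟩ : Fin (n+1)) : ℕ) < n from y.isLt)
        rw [h1]
        show ((σ ⟨(y:ℕ), y.isLt⟩ : Fin n) : ℕ) = (y : ℕ)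
        have : (⟨(y:ℕ), y.isLt⟩ : Fin n) = y := Fin.ext rfl
        rw [this, hy]
  have hinj : Function.Injective
      (fun i : Fin n => (⟨i, lt_trans i.isLt (Nat.lt_succ_self n)⟩ : Fin (n+1))) :=
    fun a b hab => Fin.ext (by simpa using congrArg Fin.val hab)
  rw [hins, Finset.card_insert_of_notMem (by
      simp only [Finset.mem_image]
      rintro ⟨y, hy, hxy⟩
      have h8 := congrArg Fin.val hxy
      have := y.isLt
      simp at h8
      omega),
    Finset.card_image_of_injective _ hinj]

lemma rbound {n : ℕ} (π : Equiv.Perm (Fin (n+1))) (hl : (π ⟨n, Nat.lt_succ_self n⟩ : ℕ) = n)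
    (i : Fin n) : (π ⟨(i:ℕ), lt_trans i.isLt (Nat.lt_succ_self n)⟩ : ℕ) < n := by
  by_contra h
  have hlt := (π ⟨(i:ℕ), lt_trans i.isLt (Nat.lt_succ_self n)⟩).isLt
  have heq : π ⟨(i:ℕ), lt_trans i.isLt (Nat.lt_succ_self n)⟩ = π ⟨n, Nat.lt_succ_self n⟩ :=
    Fin.ext (by omega)
  have := congrArg Fin.val (π.injective heq)
  have hi := i.isLt
  simp only [] at this
  omega

noncomputable def rperm {n : ℕ} (π : Equiv.Perm (Fin (n+1))) (hl : (π ⟨n, Nat.lt_succ_self n⟩ : ℕ) = n) :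
    Equiv.Perm (Fin n) :=
  mkPerm (fun i => ⟨π ⟨(i:ℕ), lt_trans i.isLt (Nat.lt_succ_self n)⟩, rbound π hl i⟩)
    (by
      intro a b hab
      have := congrArg Fin.val hab
      simp only [] at this
      have : π ⟨(a:ℕ), _⟩ = π ⟨(b:ℕ), _⟩ := Fin.ext this
      have := congrArg Fin.val (π.injective this)
      simp only [] at this
      exact Fin.ext this)

lemma eperm_rperm {n : ℕ} (π : Equiv.Perm (Fin (n+1)))
    (hl : (π ⟨n, Nat.lt_succ_self n⟩ : ℕ) = n) : eperm (rperm π hl) = π := by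
  apply Equiv.ext
  intro i
  by_cases h : (i:ℕ) < n
  · apply Fin.ext
    rw [eperm_lt _ h]
    show ((π ⟨(i:ℕ), _⟩ : Fin (n+1)) : ℕ) = (π i : ℕ)
    congr 1
  · have hi : i = ⟨n, Nat.lt_succ_self n⟩ := Fin.ext (show (i:ℕ) = n by omega)
    rw [eperm_last _ h, hi]
    exact (Fin.ext hl.symm : (⟨n, Nat.lt_succ_self n⟩ : Fin (n+1)) = π ⟨n, _⟩)

lemma eperm_injective {n : ℕ} : Function.Injective (@eperm n) := by
  intro σ τ h
  apply Equiv.ext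
  intro i
  have hlt : ((⟨(i:ℕ), lt_trans i.isLt (Nat.lt_succ_self n)⟩ : Fin (n+1)) : ℕ) < n := i.isLt
  have e := congrArg Fin.val (Equiv.ext_iff.mp h ⟨(i:ℕ), lt_trans i.isLt (Nat.lt_succ_self n)⟩)
  rw [eperm_lt σ hlt, eperm_lt τ hlt] at e
  simp only [Fin.eta, Fin.val_mk] at e
  exact Fin.ext (by simpa using e)
/-! ### the build construction -/

def bfun (n t : ℕ) (ht : 2*t+2 ≤ n) (β : Equiv.Perm (Fin t)) (μ : Equiv.Perm (Fin (n-2-2*t)))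
    (i : Fin n) : Fin n :=
  if h1 : (i:ℕ) < t then
    ⟨n-1-t + (β ⟨i, h1⟩ : ℕ), by have := (β ⟨i, h1⟩).isLt; omega⟩
  else if h2 : (i:ℕ) = t then ⟨n-1, by omega⟩
  else if h3 : (i:ℕ) < n-1-t then
    ⟨t+1 + (μ ⟨(i:ℕ)-(t+1), by omega⟩ : ℕ), by have := (μ ⟨(i:ℕ)-(t+1), by omega⟩).isLt; omega⟩
  else if h4 : (i:ℕ) < n-1 then
    ⟨(β.symm ⟨(i:ℕ)-(n-1-t), by omega⟩ : ℕ), by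
      have := (β.symm ⟨(i:ℕ)-(n-1-t), by omega⟩).isLt; omega⟩
  else ⟨t, by omega⟩

section Build
variable {n t : ℕ} {ht : 2*t+2 ≤ n} {β : Equiv.Perm (Fin t)} {μ : Equiv.Perm (Fin (n-2-2*t))}

lemma bfun_P {i : Fin n} {a : Fin t} (hia : (i:ℕ) = (a:ℕ)) :
    (bfun n t ht β μ i : ℕ) = n-1-t + β a := by
  have ha := a.isLt
  rw [bfun, dif_pos (show (i:ℕ) < t by omega)]
  show n-1-t + (β ⟨(i:ℕ), _⟩ : ℕ) = _
  exact congrArg (fun z => n-1-t + ((β z : Fin t) : ℕ)) (Fin.ext hia)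

lemma bfun_T {i : Fin n} (h : (i:ℕ) = t) :
    (bfun n t ht β μ i : ℕ) = n-1 := by
  rw [bfun, dif_neg (by omega), dif_pos h]

lemma bfun_M {i : Fin n} {j : Fin (n-2-2*t)} (hij : (i:ℕ) = t+1+(j:ℕ)) :
    (bfun n t ht β μ i : ℕ) = t+1 + μ j := by
  have hj := j.isLt
  rw [bfun, dif_neg (by omega), dif_neg (by omega), dif_pos (show (i:ℕ) < n-1-t by omega)]
  show t+1 + (μ ⟨(i:ℕ)-(t+1), _⟩ : ℕ) = _
  exact congrArg (fun z => t+1 + ((μ z : Fin (n-2-2*t)) : ℕ))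
    (Fin.ext (show (i:ℕ)-(t+1) = (j:ℕ) by omega))

lemma bfun_V {i : Fin n} {a : Fin t} (hia : (i:ℕ) = n-1-t+(a:ℕ)) :
    (bfun n t ht β μ i : ℕ) = β.symm a := by
  have ha := a.isLt
  rw [bfun, dif_neg (by omega), dif_neg (by omega), dif_neg (by omega),
    dif_pos (show (i:ℕ) < n-1 by omega)]
  show ((β.symm ⟨(i:ℕ)-(n-1-t), _⟩ : Fin t) : ℕ) = _
  exact congrArg (fun z => ((β.symm z : Fin t) : ℕ))
    (Fin.ext (show (i:ℕ)-(n-1-t) = (a:ℕ) by omega))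

lemma bfun_L {i : Fin n} (h : (i:ℕ) = n-1) :
    (bfun n t ht β μ i : ℕ) = t := by
  rw [bfun, dif_neg (by omega), dif_neg (by omega), dif_neg (by omega), dif_neg (by omega)]

lemma bfun_bfun (ht : 2*t+2 ≤ n) (β : Equiv.Perm (Fin t)) (μ ν : Equiv.Perm (Fin (n-2-2*t)))
    (hμν : ∀ j, ν (μ j) = j) (i : Fin n) : bfun n t ht β ν (bfun n t ht β μ i) = i := by
  by_cases h1 : (i:ℕ) < t
  · set a : Fin t := ⟨(i:ℕ), h1⟩ with ha
    have hv : (bfun n t ht β μ i : ℕ) = n-1-t + (β a : ℕ) := bfun_P rfl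
    have hb := (β a).isLt
    have hv2 : (bfun n t ht β ν (bfun n t ht β μ i) : ℕ) = ((β.symm (β a) : Fin t) : ℕ) :=
      bfun_V (by omega)
    apply Fin.ext
    rw [hv2, Equiv.symm_apply_apply]
  · by_cases h2 : (i:ℕ) = t
    · have hv : (bfun n t ht β μ i : ℕ) = n-1 := bfun_T (ht := ht) h2
      have hv2 : (bfun n t ht β ν (bfun n t ht β μ i) : ℕ) = t := bfun_L hv
      apply Fin.ext
      omega
    · by_cases h3 : (i:ℕ) < n-1-t
      · set j : Fin (n-2-2*t) := ⟨(i:ℕ)-(t+1), by omega⟩ with hj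
        have hjv : (j:ℕ) = (i:ℕ)-(t+1) := rfl
        have hv : (bfun n t ht β μ i : ℕ) = t+1 + (μ j : ℕ) := bfun_M (by omega)
        have hv2 : (bfun n t ht β ν (bfun n t ht β μ i) : ℕ) = t+1 + ((ν (μ j) : Fin _) : ℕ) :=
          bfun_M hv
        have he := congrArg Fin.val (hμν j)
        apply Fin.ext
        omega
      · by_cases h4 : (i:ℕ) < n-1
        · set a : Fin t := ⟨(i:ℕ)-(n-1-t), by omega⟩ with ha
          have hav : (a:ℕ) = (i:ℕ)-(n-1-t) := rfl
          have hv : (bfun n t ht β μ i : ℕ) = ((β.symm a : Fin t) : ℕ) := bfun_V (by omega)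
          have hv2 : (bfun n t ht β ν (bfun n t ht β μ i) : ℕ)
              = n-1-t + ((β (β.symm a) : Fin t) : ℕ) := bfun_P hv
          have he := congrArg Fin.val (Equiv.apply_symm_apply β a)
          apply Fin.ext
          omega
        · have hi : (i:ℕ) = n-1 := by have := i.isLt; omega
          have hv : (bfun n t ht β μ i : ℕ) = t := bfun_L hi
          have hv2 : (bfun n t ht β ν (bfun n t ht β μ i) : ℕ) = n-1 := bfun_T (ht := ht) hv
          apply Fin.ext
          omega

noncomputable def build (n t : ℕ) (ht : 2*t+2 ≤ n) (β : Equiv.Perm (Fin t))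
    (μ : Equiv.Perm (Fin (n-2-2*t))) : Equiv.Perm (Fin n) where
  toFun := bfun n t ht β μ
  invFun := bfun n t ht β μ.symm
  left_inv := fun i => bfun_bfun ht β μ μ.symm (fun j => Equiv.symm_apply_apply μ j) i
  right_inv := fun i => bfun_bfun ht β μ.symm μ (fun j => Equiv.apply_symm_apply μ j) i

lemma build_apply (i : Fin n) : build n t ht β μ i = bfun n t ht β μ i := rfl

lemma build_P {i : Fin n} {a : Fin t} (hia : (i:ℕ) = (a:ℕ)) :
    (build n t ht β μ i : ℕ) = n-1-t + β a := bfun_P (ht := ht) hia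

lemma build_T {i : Fin n} (h : (i:ℕ) = t) : (build n t ht β μ i : ℕ) = n-1 := bfun_T (ht := ht) h

lemma build_M {i : Fin n} {j : Fin (n-2-2*t)} (hij : (i:ℕ) = t+1+(j:ℕ)) :
    (build n t ht β μ i : ℕ) = t+1 + μ j := bfun_M (ht := ht) hij

lemma build_V {i : Fin n} {a : Fin t} (hia : (i:ℕ) = n-1-t+(a:ℕ)) :
    (build n t ht β μ i : ℕ) = β.symm a := bfun_V (ht := ht) hia

lemma build_L {i : Fin n} (h : (i:ℕ) = n-1) : (build n t ht β μ i : ℕ) = t := bfun_L (ht := ht) h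

lemma build_inv (hμ : IsInvolution μ) : IsInvolution (build n t ht β μ) :=
  fun i => bfun_bfun ht β μ μ hμ i

lemma build_inv_rev (h : IsInvolution (build n t ht β μ)) : IsInvolution μ := by
  intro j
  have hj := j.isLt
  set x : Fin n := ⟨t+1+(j:ℕ), by omega⟩ with hx
  have hxv : (x:ℕ) = t+1+(j:ℕ) := rfl
  have h1 : (build n t ht β μ x : ℕ) = t+1+(μ j : ℕ) := build_M rfl
  have h2 : (build n t ht β μ (build n t ht β μ x) : ℕ) = t+1+((μ (μ j) : Fin _) : ℕ) :=
    build_M h1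
  have h3 := congrArg Fin.val (h x)
  apply Fin.ext
  have := (μ (μ j)).isLt
  omega

lemma build_av (hβ : Avoids132 β) (hμ : Avoids132 μ) : Avoids132 (build n t ht β μ) := by
  rintro ⟨i, j, k, hij, hjk, h1, h2⟩
  rw [Fin.lt_def] at hij hjk h1 h2
  rcases lt_trichotomy ((k:ℕ)) t with hk | hk | hk
  · -- all three in P
    set ai : Fin t := ⟨(i:ℕ), by omega⟩
    set aj : Fin t := ⟨(j:ℕ), by omega⟩
    set ak : Fin t := ⟨(k:ℕ), by omega⟩
    have e1 : (build n t ht β μ i : ℕ) = n-1-t + β ai := build_P rfl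
    have e2 : (build n t ht β μ j : ℕ) = n-1-t + β aj := build_P rfl
    have e3 : (build n t ht β μ k : ℕ) = n-1-t + β ak := build_P rfl
    exact hβ ⟨ai, aj, ak, by rw [Fin.lt_def]; exact hij, by rw [Fin.lt_def]; exact hjk,
      by rw [Fin.lt_def]; omega, by rw [Fin.lt_def]; omega⟩
  · -- k = t : π k is the maximum, contradiction with h2
    have e3 : (build n t ht β μ k : ℕ) = n-1 := build_T hk
    have := (build n t ht β μ j).isLt
    omega
  · rcases lt_or_ge ((k:ℕ)) (n-1-t) with hk2 | hk2
    · -- k in middle; show i and j in middle too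
      set jk : Fin (n-2-2*t) := ⟨(k:ℕ)-(t+1), by omega⟩ with hjk'
      have e3 : (build n t ht β μ k : ℕ) = t+1 + μ jk := build_M (by
        show (k:ℕ) = t+1+((k:ℕ)-(t+1)); omega)
      have hμk := (μ jk).isLt
      have hi : t < (i:ℕ) := by
        rcases lt_trichotomy ((i:ℕ)) t with hi | hi | hi
        · exfalso
          set ai : Fin t := ⟨(i:ℕ), by omega⟩
          have e1 : (build n t ht β μ i : ℕ) = n-1-t + β ai := build_P rfl
          omega
        · exfalso
          have e1 : (build n t ht β μ i : ℕ) = n-1 := build_T hi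
          omega
        · exact hi
      -- i, j in middle
      set ji : Fin (n-2-2*t) := ⟨(i:ℕ)-(t+1), by omega⟩
      set jj : Fin (n-2-2*t) := ⟨(j:ℕ)-(t+1), by omega⟩
      have e1 : (build n t ht β μ i : ℕ) = t+1 + μ ji := build_M (by
        show (i:ℕ) = t+1+((i:ℕ)-(t+1)); omega)
      have e2 : (build n t ht β μ j : ℕ) = t+1 + μ jj := build_M (by
        show (j:ℕ) = t+1+((j:ℕ)-(t+1)); omega)
      exact hμ ⟨ji, jj, jk, by rw [Fin.lt_def]; show (i:ℕ)-(t+1) < (j:ℕ)-(t+1); omega,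
        by rw [Fin.lt_def]; show (j:ℕ)-(t+1) < (k:ℕ)-(t+1); omega,
        by rw [Fin.lt_def]; omega, by rw [Fin.lt_def]; omega⟩
    · rcases lt_or_ge ((k:ℕ)) (n-1) with hk3 | hk3
      · -- k in V region
        set ak : Fin t := ⟨(k:ℕ)-(n-1-t), by omega⟩
        have e3 : (build n t ht β μ k : ℕ) = β.symm ak := build_V (by
          show (k:ℕ) = n-1-t+((k:ℕ)-(n-1-t)); omega)
        have hbs := (β.symm ak).isLt
        have hi : n-1-t ≤ (i:ℕ) := by
          by_contra hcon
          push_neg at hcon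
          rcases lt_trichotomy ((i:ℕ)) t with hi | hi | hi
          · set ai : Fin t := ⟨(i:ℕ), by omega⟩
            have e1 : (build n t ht β μ i : ℕ) = n-1-t + β ai := build_P rfl
            omega
          · have e1 : (build n t ht β μ i : ℕ) = n-1 := build_T hi
            omega
          · set ji : Fin (n-2-2*t) := ⟨(i:ℕ)-(t+1), by omega⟩
            have e1 : (build n t ht β μ i : ℕ) = t+1 + μ ji := build_M (by
              show (i:ℕ) = t+1+((i:ℕ)-(t+1)); omega)
            omega
        set ai : Fin t := ⟨(i:ℕ)-(n-1-t), by omega⟩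
        set aj : Fin t := ⟨(j:ℕ)-(n-1-t), by omega⟩
        have e1 : (build n t ht β μ i : ℕ) = β.symm ai := build_V (by
          show (i:ℕ) = n-1-t+((i:ℕ)-(n-1-t)); omega)
        have e2 : (build n t ht β μ j : ℕ) = β.symm aj := build_V (by
          show (j:ℕ) = n-1-t+((j:ℕ)-(n-1-t)); omega)
        exact (avoids_symm hβ) ⟨ai, aj, ak,
          by rw [Fin.lt_def]; show (i:ℕ)-(n-1-t) < (j:ℕ)-(n-1-t); omega,
          by rw [Fin.lt_def]; show (j:ℕ)-(n-1-t) < (k:ℕ)-(n-1-t); omega,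
          by rw [Fin.lt_def]; omega, by rw [Fin.lt_def]; omega⟩
      · -- k = last
        have hkl : (k:ℕ) = n-1 := by have := k.isLt; omega
        have e3 : (build n t ht β μ k : ℕ) = t := build_L hkl
        -- h1 : build i < t, so i must be in V region; then j in V too, value < t = build k
        have hi : n-1-t ≤ (i:ℕ) := by
          by_contra hcon
          push_neg at hcon
          rcases lt_trichotomy ((i:ℕ)) t with hi | hi | hi
          · set ai : Fin t := ⟨(i:ℕ), by omega⟩
            have e1 : (build n t ht β μ i : ℕ) = n-1-t + β ai := build_P rfl
            omega
          · have e1 : (build n t ht β μ i : ℕ) = n-1 := build_T hi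
            omega
          · set ji : Fin (n-2-2*t) := ⟨(i:ℕ)-(t+1), by omega⟩
            have e1 : (build n t ht β μ i : ℕ) = t+1 + μ ji := build_M (by
              show (i:ℕ) = t+1+((i:ℕ)-(t+1)); omega)
            omega
        set aj : Fin t := ⟨(j:ℕ)-(n-1-t), by omega⟩
        have e2 : (build n t ht β μ j : ℕ) = β.symm aj := build_V (by
          show (j:ℕ) = n-1-t+((j:ℕ)-(n-1-t)); omega)
        have := (β.symm aj).isLt
        omega

lemma build_av_rev_β (hA : Avoids132 (build n t ht β μ)) : Avoids132 β := by
  rintro ⟨a, b, c, hab, hbc, h1, h2⟩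
  rw [Fin.lt_def] at hab hbc h1 h2
  have hc := c.isLt
  set xa : Fin n := ⟨(a:ℕ), by omega⟩
  set xb : Fin n := ⟨(b:ℕ), by omega⟩
  set xc : Fin n := ⟨(c:ℕ), by omega⟩
  have e1 : (build n t ht β μ xa : ℕ) = n-1-t + β a := build_P rfl
  have e2 : (build n t ht β μ xb : ℕ) = n-1-t + β b := build_P rfl
  have e3 : (build n t ht β μ xc : ℕ) = n-1-t + β c := build_P rfl
  exact hA ⟨xa, xb, xc, by rw [Fin.lt_def]; exact hab, by rw [Fin.lt_def]; exact hbc,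
    by rw [Fin.lt_def]; omega, by rw [Fin.lt_def]; omega⟩

lemma build_av_rev_μ (hA : Avoids132 (build n t ht β μ)) : Avoids132 μ := by
  rintro ⟨a, b, c, hab, hbc, h1, h2⟩
  rw [Fin.lt_def] at hab hbc h1 h2
  have hc := c.isLt
  set xa : Fin n := ⟨t+1+(a:ℕ), by omega⟩
  set xb : Fin n := ⟨t+1+(b:ℕ), by omega⟩
  set xc : Fin n := ⟨t+1+(c:ℕ), by omega⟩
  have e1 : (build n t ht β μ xa : ℕ) = t+1 + μ a := build_M rfl
  have e2 : (build n t ht β μ xb : ℕ) = t+1 + μ b := build_M rfl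
  have e3 : (build n t ht β μ xc : ℕ) = t+1 + μ c := build_M rfl
  exact hA ⟨xa, xb, xc, by rw [Fin.lt_def]; show t+1+(a:ℕ) < t+1+(b:ℕ); omega,
    by rw [Fin.lt_def]; show t+1+(b:ℕ) < t+1+(c:ℕ); omega,
    by rw [Fin.lt_def]; omega, by rw [Fin.lt_def]; omega⟩

lemma build_fix : fixCount (build n t ht β μ) = fixCount μ := by
  rw [fixCount, fixCount]
  have hins : (Finset.univ.filter fun i : Fin n => build n t ht β μ i = i) =
      (Finset.univ.filter fun j : Fin (n-2-2*t) => μ j = j).image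
        (fun j : Fin (n-2-2*t) => (⟨t+1+(j:ℕ), by have := j.isLt; omega⟩ : Fin n)) := by
    ext x
    simp only [Finset.mem_filter, Finset.mem_univ, true_and, Finset.mem_image]
    constructor
    · intro hx
      have hxv := congrArg Fin.val hx
      by_cases c1 : (x:ℕ) < t
      · exfalso
        set a : Fin t := ⟨(x:ℕ), c1⟩
        have e1 : (build n t ht β μ x : ℕ) = n-1-t + β a := build_P rfl
        omega
      · by_cases c2 : (x:ℕ) = t
        · exfalso
          have e1 : (build n t ht β μ x : ℕ) = n-1 := build_T c2
          omega
        · by_cases c3 : (x:ℕ) < n-1-t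
          · set j : Fin (n-2-2*t) := ⟨(x:ℕ)-(t+1), by omega⟩ with hj
            have e1 : (build n t ht β μ x : ℕ) = t+1 + μ j := build_M (by
              show (x:ℕ) = t+1+((x:ℕ)-(t+1)); omega)
            exact ⟨j, Fin.ext (by
                show ((μ j : Fin _) : ℕ) = (x:ℕ)-(t+1); omega),
              Fin.ext (by show t+1+((x:ℕ)-(t+1)) = (x:ℕ); omega)⟩
          · by_cases c4 : (x:ℕ) < n-1
            · exfalso
              set a : Fin t := ⟨(x:ℕ)-(n-1-t), by omega⟩
              have e1 : (build n t ht β μ x : ℕ) = β.symm a := build_V (by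
                show (x:ℕ) = n-1-t+((x:ℕ)-(n-1-t)); omega)
              have := (β.symm a).isLt
              omega
            · exfalso
              have hxl : (x:ℕ) = n-1 := by have := x.isLt; omega
              have e1 : (build n t ht β μ x : ℕ) = t := build_L hxl
              omega
    · rintro ⟨j, hj, rfl⟩
      apply Fin.ext
      show (build n t ht β μ ⟨t+1+(j:ℕ), by have := j.isLt; omega⟩ : ℕ) = t+1+(j:ℕ)
      rw [build_M (j := j) rfl]
      have hjv := congrArg Fin.val hj
      omega
  rw [hins, Finset.card_image_of_injective _ (fun a b hab => Fin.ext (by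
    have := congrArg Fin.val hab
    simp only [Fin.val_mk] at this
    omega))]

lemma build_last : (build n t ht β μ ⟨n-1, by omega⟩ : ℕ) = t := build_L rfl

lemma build_inj {β' : Equiv.Perm (Fin t)} {μ' : Equiv.Perm (Fin (n-2-2*t))}
    (h : build n t ht β μ = build n t ht β' μ') : β = β' ∧ μ = μ' := by
  constructor
  · apply Equiv.ext
    intro a
    have ha := a.isLt
    set x : Fin n := ⟨(a:ℕ), by omega⟩
    have e1 : (build n t ht β μ x : ℕ) = n-1-t + β a := build_P rfl
    have e2 : (build n t ht β' μ' x : ℕ) = n-1-t + β' a := build_P rfl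
    rw [h] at e1
    exact Fin.ext (by omega)
  · apply Equiv.ext
    intro a
    have ha := a.isLt
    set x : Fin n := ⟨t+1+(a:ℕ), by omega⟩
    have e1 : (build n t ht β μ x : ℕ) = t+1 + μ a := build_M rfl
    have e2 : (build n t ht β' μ' x : ℕ) = t+1 + μ' a := build_M rfl
    rw [h] at e1
    exact Fin.ext (by omega)

end Build
/-! ### structure theorem: extraction -/

set_option maxHeartbeats 2000000 in
lemma struct {n : ℕ} (hn : 1 ≤ n) (π : Equiv.Perm (Fin n)) (hInv : IsInvolution π)
    (hAv : Avoids132 π) (hlast : (π ⟨n-1, by omega⟩ : ℕ) ≠ n-1) :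
    ∃ (t : ℕ) (ht : 2*t+2 ≤ n) (β : Equiv.Perm (Fin t)) (μ : Equiv.Perm (Fin (n-2-2*t))),
      π = build n t ht β μ := by
  set L : Fin n := ⟨n-1, by omega⟩ with hL
  set tf : Fin n := π L with htf
  have hLv : (L:ℕ) = n-1 := rfl
  have htfv : (tf:ℕ) = ((π L : Fin n) : ℕ) := rfl
  have hπt : π tf = L := hInv L
  have hπtv := congrArg Fin.val hπt
  -- F1
  have F1 : ∀ i l : Fin n, (i:ℕ) < (tf:ℕ) → (tf:ℕ) < (l:ℕ) → (π l : ℕ) < (π i : ℕ) := by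
    intro i l hi hl
    by_contra hcon
    push_neg at hcon
    have hne : (π i : ℕ) ≠ (π l : ℕ) := by
      intro he
      have h5 := congrArg Fin.val (π.injective (Fin.ext he))
      omega
    have hlL : (π l : ℕ) < n-1 := by
      have hlt := (π l).isLt
      rcases Nat.lt_or_ge ((π l : ℕ)) (n-1) with h | h
      · exact h
      · exfalso
        have h7 : π l = L := Fin.ext (by omega)
        have h8 : l = π L := by
          have h9 := congrArg π h7
          rwa [hInv l] at h9
        have h10 := congrArg Fin.val h8
        omega
    apply hAv
    refine ⟨i, tf, l, by rw [Fin.lt_def]; omega, by rw [Fin.lt_def]; omega, ?_, ?_⟩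
    · rw [Fin.lt_def]; omega
    · rw [Fin.lt_def, hπt]; omega
  -- F2
  have F2 : ∀ i : Fin n, (i:ℕ) < (tf:ℕ) → n-1-(tf:ℕ) ≤ (π i : ℕ) := by
    intro i hi
    have hsub : (Finset.univ.filter fun j : Fin n => π i < π j) ⊆ (Finset.Iic tf).erase i := by
      intro j hj
      rw [Finset.mem_filter] at hj
      rw [Finset.mem_erase, Finset.mem_Iic]
      have hj2 := hj.2
      rw [Fin.lt_def] at hj2
      constructor
      · intro he; rw [he] at hj2; omega
      · by_contra hc
        rw [Fin.le_def] at hc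
        push_neg at hc
        have := F1 i j hi hc
        omega
    have himg : (Finset.univ.filter fun j : Fin n => π i < π j).image π
        = Finset.univ.filter fun v : Fin n => π i < v := by
      ext v
      simp only [Finset.mem_image, Finset.mem_filter, Finset.mem_univ, true_and]
      constructor
      · rintro ⟨x, hx, rfl⟩; exact hx
      · intro hv
        exact ⟨π.symm v, by rw [Equiv.apply_symm_apply]; exact hv, Equiv.apply_symm_apply π v⟩
    have hio : (Finset.univ.filter fun v : Fin n => π i < v) = Finset.Ioi (π i) := by
      ext v
      simp [Finset.mem_Ioi]
    have hcard1 : (Finset.univ.filter fun j : Fin n => π i < π j).card = n - 1 - (π i : ℕ) := by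
      have h1 := Finset.card_image_of_injective
        (Finset.univ.filter fun j : Fin n => π i < π j) π.injective
      rw [himg, hio, Fin.card_Ioi] at h1
      omega
    have hcard2 : ((Finset.Iic tf).erase i).card = (tf:ℕ) := by
      rw [Finset.card_erase_of_mem (Finset.mem_Iic.mpr (by rw [Fin.le_def]; omega)),
        Fin.card_Iic]
      omega
    have := Finset.card_le_card hsub
    have hpl := (π i).isLt
    omega
  -- F3
  have F3 : ∀ l : Fin n, (tf:ℕ) < (l:ℕ) → (π l : ℕ) + (tf:ℕ) + 2 ≤ n := by
    intro l hl
    have hsub : (Finset.univ.filter fun j : Fin n => π j < π l) ⊆ (Finset.Ioi tf).erase l := by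
      intro j hj
      rw [Finset.mem_filter] at hj
      rw [Finset.mem_erase, Finset.mem_Ioi]
      have hj2 := hj.2
      rw [Fin.lt_def] at hj2
      constructor
      · intro he; rw [he] at hj2; omega
      · rw [Fin.lt_def]
        by_contra hc
        push_neg at hc
        rcases Nat.lt_or_ge ((j:ℕ)) ((tf:ℕ)) with h | h
        · have := F1 j l h hl
          omega
        · have hjt : j = tf := Fin.ext (by omega)
          rw [hjt, hπt] at hj2
          have := (π l).isLt
          omega
    have himg : (Finset.univ.filter fun j : Fin n => π j < π l).image π
        = Finset.univ.filter fun v : Fin n => v < π l := by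
      ext v
      simp only [Finset.mem_image, Finset.mem_filter, Finset.mem_univ, true_and]
      constructor
      · rintro ⟨x, hx, rfl⟩; exact hx
      · intro hv
        exact ⟨π.symm v, by rw [Equiv.apply_symm_apply]; exact hv, Equiv.apply_symm_apply π v⟩
    have hio : (Finset.univ.filter fun v : Fin n => v < π l) = Finset.Iio (π l) := by
      ext v
      simp [Finset.mem_Iio]
    have hcard1 : (Finset.univ.filter fun j : Fin n => π j < π l).card = (π l : ℕ) := by
      have h1 := Finset.card_image_of_injective
        (Finset.univ.filter fun j : Fin n => π j < π l) π.injective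
      rw [himg, hio, Fin.card_Iio] at h1
      omega
    have hcard2 : ((Finset.Ioi tf).erase l).card = n - 1 - (tf:ℕ) - 1 := by
      rw [Finset.card_erase_of_mem (Finset.mem_Ioi.mpr (by rw [Fin.lt_def]; omega)),
        Fin.card_Ioi]
    have := Finset.card_le_card hsub
    have := tf.isLt
    omega
  -- F4
  have F4 : 2*(tf:ℕ)+2 ≤ n := by
    have h1 := F3 L (by have := tf.isLt; omega)
    omega
  -- F6
  have F6 : ∀ v : Fin n, n-1-(tf:ℕ) ≤ (v:ℕ) → (v:ℕ) < n-1 → (π v : ℕ) < (tf:ℕ) := by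
    intro v h1 h2
    rcases lt_trichotomy ((π v : ℕ)) ((tf:ℕ)) with h | h | h
    · exact h
    · exfalso
      have hv : π v = tf := Fin.ext h
      have h5 := congrArg π hv
      rw [hInv v, hπt] at h5
      have := congrArg Fin.val h5
      omega
    · exfalso
      have h3 := F3 (π v) h
      have h4 := congrArg Fin.val (hInv v)
      omega
  -- F5
  have F5 : ∀ x : Fin n, (tf:ℕ) < (x:ℕ) → (x:ℕ) ≤ n-2-(tf:ℕ) →
      (tf:ℕ) < (π x : ℕ) ∧ (π x : ℕ) ≤ n-2-(tf:ℕ) := by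
    intro x hx1 hx2
    have hub := F3 x hx1
    constructor
    · rcases lt_trichotomy ((π x : ℕ)) ((tf:ℕ)) with h | h | h
      · exfalso
        have h5 := F2 (π x) h
        have h4 := congrArg Fin.val (hInv x)
        omega
      · exfalso
        have hv : π x = tf := Fin.ext h
        have h5 := congrArg π hv
        rw [hInv x, hπt] at h5
        have := congrArg Fin.val h5
        omega
      · exact h
    · omega
  -- F7
  have F7 : ∀ x : Fin n, (x:ℕ) < (tf:ℕ) → (π x : ℕ) ≤ n-2 := by
    intro x hx
    have hlt := (π x).isLt
    rcases Nat.lt_or_ge ((π x : ℕ)) (n-1) with h | h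
    · omega
    · exfalso
      have h7 : π x = L := Fin.ext (by omega)
      have h8 := congrArg π h7
      rw [hInv x] at h8
      have := congrArg Fin.val h8
      omega
  -- embeddings
  have htflt := tf.isLt
  set ep : Fin (tf:ℕ) → Fin n := fun a => ⟨(a:ℕ), by have := a.isLt; omega⟩ with hep
  have hepv : ∀ a : Fin (tf:ℕ), ((ep a : Fin n) : ℕ) = (a:ℕ) := fun a => rfl
  set em : Fin (n-2-2*(tf:ℕ)) → Fin n := fun j => ⟨(tf:ℕ)+1+(j:ℕ), by have := j.isLt; omega⟩
    with hem
  have hemv : ∀ j, ((em j : Fin n) : ℕ) = (tf:ℕ)+1+(j:ℕ) := fun j => rfl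
  -- the prefix permutation
  set gβ : Fin (tf:ℕ) → Fin (tf:ℕ) := fun a =>
    ⟨(π (ep a) : ℕ) - (n-1-(tf:ℕ)), by
      have h1 := F7 (ep a) (by rw [hepv]; exact a.isLt)
      have h2 := F2 (ep a) (by rw [hepv]; exact a.isLt)
      omega⟩ with hgβ
  have hgβv : ∀ a, ((gβ a : Fin (tf:ℕ)) : ℕ) = (π (ep a) : ℕ) - (n-1-(tf:ℕ)) := fun a => rfl
  have hgβinj : Function.Injective gβ := by
    intro a b hab
    have h1 := F2 (ep a) (by rw [hepv]; exact a.isLt)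
    have h2 := F2 (ep b) (by rw [hepv]; exact b.isLt)
    have h3 := congrArg Fin.val hab
    rw [hgβv, hgβv] at h3
    have he : π (ep a) = π (ep b) := Fin.ext (by omega)
    have h4 := congrArg Fin.val (π.injective he)
    rw [hepv, hepv] at h4
    exact Fin.ext h4
  set getβ := mkPerm gβ hgβinj with hgetβ
  have hgetβv : ∀ a, ((getβ a : Fin (tf:ℕ)) : ℕ) = (π (ep a) : ℕ) - (n-1-(tf:ℕ)) :=
    fun a => rfl
  -- the middle permutation
  set gμ : Fin (n-2-2*(tf:ℕ)) → Fin (n-2-2*(tf:ℕ)) := fun j =>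
    ⟨(π (em j) : ℕ) - ((tf:ℕ)+1), by
      have h1 := F5 (em j) (by rw [hemv]; omega) (by rw [hemv]; have := j.isLt; omega)
      omega⟩ with hgμ
  have hgμv : ∀ j, ((gμ j : Fin (n-2-2*(tf:ℕ))) : ℕ) = (π (em j) : ℕ) - ((tf:ℕ)+1) :=
    fun j => rfl
  have hgμinj : Function.Injective gμ := by
    intro a b hab
    have h1 := F5 (em a) (by rw [hemv]; omega) (by rw [hemv]; have := a.isLt; omega)
    have h2 := F5 (em b) (by rw [hemv]; omega) (by rw [hemv]; have := b.isLt; omega)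
    have h3 := congrArg Fin.val hab
    rw [hgμv, hgμv] at h3
    have he : π (em a) = π (em b) := Fin.ext (by omega)
    have h4 := congrArg Fin.val (π.injective he)
    rw [hemv, hemv] at h4
    exact Fin.ext (by omega)
  set getμ := mkPerm gμ hgμinj with hgetμ
  have hgetμv : ∀ j, ((getμ j : Fin (n-2-2*(tf:ℕ))) : ℕ) = (π (em j) : ℕ) - ((tf:ℕ)+1) :=
    fun j => rfl
  refine ⟨(tf:ℕ), F4, getβ, getμ, ?_⟩
  apply Equiv.ext
  intro i
  apply Fin.ext
  by_cases c1 : (i:ℕ) < (tf:ℕ)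
  · set a : Fin (tf:ℕ) := ⟨(i:ℕ), c1⟩ with hafin
    rw [build_P (n := n) (t := (tf:ℕ)) (ht := F4) (β := getβ) (μ := getμ) (a := a) rfl]
    have hga := hgetβv a
    have hepa : ep a = i := Fin.ext (hepv a)
    have h10 : (π (ep a) : ℕ) = (π i : ℕ) := by rw [hepa]
    have hb := F2 i c1
    omega
  · by_cases c2 : (i:ℕ) = (tf:ℕ)
    · rw [build_T (n := n) (t := (tf:ℕ)) (ht := F4) (β := getβ) (μ := getμ) c2]
      have hit : i = tf := Fin.ext c2
      rw [hit, hπt]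
    · by_cases c3 : (i:ℕ) < n-1-(tf:ℕ)
      · set j : Fin (n-2-2*(tf:ℕ)) := ⟨(i:ℕ)-((tf:ℕ)+1), by omega⟩ with hjfin
        have hjv : (j:ℕ) = (i:ℕ)-((tf:ℕ)+1) := rfl
        rw [build_M (n := n) (t := (tf:ℕ)) (ht := F4) (β := getβ) (μ := getμ) (j := j) (by omega)]
        have hgj := hgetμv j
        have hemj : em j = i := Fin.ext (by rw [hemv]; omega)
        have h10 : (π (em j) : ℕ) = (π i : ℕ) := by rw [hemj]
        have hb := F5 i (by omega) (by omega)
        omega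
      · by_cases c4 : (i:ℕ) < n-1
        · set a : Fin (tf:ℕ) := ⟨(i:ℕ)-(n-1-(tf:ℕ)), by omega⟩ with hafin
          have hav : (a:ℕ) = (i:ℕ)-(n-1-(tf:ℕ)) := rfl
          rw [build_V (n := n) (t := (tf:ℕ)) (ht := F4) (β := getβ) (μ := getμ) (a := a) (by omega)]
          set b : Fin (tf:ℕ) := ⟨(π i : ℕ), F6 i (by omega) c4⟩ with hbfin
          have hbv : (b:ℕ) = (π i : ℕ) := rfl
          have hgb := hgetβv b
          have hepb : ep b = π i := Fin.ext (by rw [hepv])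
          have h10 : (π (ep b) : ℕ) = (π (π i) : ℕ) := by rw [hepb]
          have h11 := congrArg Fin.val (hInv i)
          have hba : getβ b = a := Fin.ext (by omega)
          have hsymm : getβ.symm a = b := by rw [← hba, Equiv.symm_apply_apply]
          rw [hsymm]
        · have hiv : (i:ℕ) = n-1 := by have := i.isLt; omega
          rw [build_L (n := n) (t := (tf:ℕ)) (ht := F4) (β := getβ) (μ := getμ) hiv]
          have hiL : i = L := Fin.ext hiv
          rw [hiL]
/-! ### reverse lemmas for eperm -/

lemma eperm_inv_rev {n : ℕ} (σ : Equiv.Perm (Fin n)) (h : IsInvolution (eperm σ)) :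
    IsInvolution σ := by
  intro j
  set x : Fin (n+1) := ⟨(j:ℕ), lt_trans j.isLt (Nat.lt_succ_self n)⟩ with hx
  have hxv : (x:ℕ) = (j:ℕ) := rfl
  have e1 : (eperm σ x : ℕ) = ((σ ⟨(x:ℕ), j.isLt⟩ : Fin n) : ℕ) := eperm_lt σ j.isLt
  have hj : (⟨(x:ℕ), j.isLt⟩ : Fin n) = j := Fin.ext rfl
  rw [hj] at e1
  have hlt : (eperm σ x : ℕ) < n := by rw [e1]; exact (σ j).isLt
  have e2 : (eperm σ (eperm σ x) : ℕ) = ((σ ⟨(eperm σ x : ℕ), hlt⟩ : Fin n) : ℕ) :=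
    eperm_lt σ hlt
  have hj2 : (⟨(eperm σ x : ℕ), hlt⟩ : Fin n) = σ j := Fin.ext e1
  rw [hj2] at e2
  have e3 := congrArg Fin.val (h x)
  exact Fin.ext (by omega)

lemma eperm_av_rev {n : ℕ} (σ : Equiv.Perm (Fin n)) (h : Avoids132 (eperm σ)) :
    Avoids132 σ := by
  rintro ⟨i, j, k, hij, hjk, h1, h2⟩
  rw [Fin.lt_def] at hij hjk h1 h2
  set xi : Fin (n+1) := ⟨(i:ℕ), lt_trans i.isLt (Nat.lt_succ_self n)⟩
  set xj : Fin (n+1) := ⟨(j:ℕ), lt_trans j.isLt (Nat.lt_succ_self n)⟩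
  set xk : Fin (n+1) := ⟨(k:ℕ), lt_trans k.isLt (Nat.lt_succ_self n)⟩
  have e1 : (eperm σ xi : ℕ) = ((σ ⟨(xi:ℕ), i.isLt⟩ : Fin n) : ℕ) := eperm_lt σ i.isLt
  have e2 : (eperm σ xj : ℕ) = ((σ ⟨(xj:ℕ), j.isLt⟩ : Fin n) : ℕ) := eperm_lt σ j.isLt
  have e3 : (eperm σ xk : ℕ) = ((σ ⟨(xk:ℕ), k.isLt⟩ : Fin n) : ℕ) := eperm_lt σ k.isLt
  rw [show (⟨(xi:ℕ), i.isLt⟩ : Fin n) = i from Fin.ext rfl] at e1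
  rw [show (⟨(xj:ℕ), j.isLt⟩ : Fin n) = j from Fin.ext rfl] at e2
  rw [show (⟨(xk:ℕ), k.isLt⟩ : Fin n) = k from Fin.ext rfl] at e3
  exact h ⟨xi, xj, xk, by rw [Fin.lt_def]; exact hij, by rw [Fin.lt_def]; exact hjk,
    by rw [Fin.lt_def]; omega, by rw [Fin.lt_def]; omega⟩

/-! ### the lift: 132-avoiding perms of s ↔ FPF avoiding involutions of 2s -/

def lfun (s : ℕ) (β : Equiv.Perm (Fin s)) (i : Fin (2*s)) : Fin (2*s) :=
  if h : (i:ℕ) < s then ⟨s + (β ⟨i, h⟩ : ℕ), by have := (β ⟨i, h⟩).isLt; omega⟩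
  else ⟨(β.symm ⟨(i:ℕ)-s, by have := i.isLt; omega⟩ : ℕ), by
    have := (β.symm ⟨(i:ℕ)-s, by have := i.isLt; omega⟩).isLt; omega⟩

lemma lfun_lo {s : ℕ} {β : Equiv.Perm (Fin s)} {i : Fin (2*s)} {a : Fin s}
    (hia : (i:ℕ) = (a:ℕ)) : (lfun s β i : ℕ) = s + β a := by
  have ha := a.isLt
  rw [lfun, dif_pos (show (i:ℕ) < s by omega)]
  show s + (β ⟨(i:ℕ), _⟩ : ℕ) = _
  exact congrArg (fun z => s + ((β z : Fin s) : ℕ)) (Fin.ext hia)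

lemma lfun_hi {s : ℕ} {β : Equiv.Perm (Fin s)} {i : Fin (2*s)} {a : Fin s}
    (hia : (i:ℕ) = s + (a:ℕ)) : (lfun s β i : ℕ) = β.symm a := by
  have ha := a.isLt
  rw [lfun, dif_neg (by omega)]
  show ((β.symm ⟨(i:ℕ)-s, _⟩ : Fin s) : ℕ) = _
  exact congrArg (fun z => ((β.symm z : Fin s) : ℕ)) (Fin.ext (show (i:ℕ)-s = (a:ℕ) by omega))

lemma lfun_lfun {s : ℕ} (β : Equiv.Perm (Fin s)) (i : Fin (2*s)) :
    lfun s β (lfun s β i) = i := by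
  by_cases h : (i:ℕ) < s
  · set a : Fin s := ⟨(i:ℕ), h⟩ with ha
    have hv : (lfun s β i : ℕ) = s + (β a : ℕ) := lfun_lo rfl
    have hv2 : (lfun s β (lfun s β i) : ℕ) = ((β.symm (β a) : Fin s) : ℕ) := lfun_hi hv
    apply Fin.ext
    rw [hv2, Equiv.symm_apply_apply]
  · set a : Fin s := ⟨(i:ℕ)-s, by have := i.isLt; omega⟩ with ha
    have hav : (a:ℕ) = (i:ℕ)-s := rfl
    have hv : (lfun s β i : ℕ) = ((β.symm a : Fin s) : ℕ) := lfun_hi (by omega)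
    have hv2 : (lfun s β (lfun s β i) : ℕ) = s + ((β (β.symm a) : Fin s) : ℕ) := lfun_lo hv
    have he := congrArg Fin.val (Equiv.apply_symm_apply β a)
    apply Fin.ext
    omega

noncomputable def lperm (s : ℕ) (β : Equiv.Perm (Fin s)) : Equiv.Perm (Fin (2*s)) where
  toFun := lfun s β
  invFun := lfun s β
  left_inv := lfun_lfun β
  right_inv := lfun_lfun β

lemma lperm_lo {s : ℕ} {β : Equiv.Perm (Fin s)} {i : Fin (2*s)} {a : Fin s}
    (hia : (i:ℕ) = (a:ℕ)) : (lperm s β i : ℕ) = s + β a := lfun_lo hia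

lemma lperm_hi {s : ℕ} {β : Equiv.Perm (Fin s)} {i : Fin (2*s)} {a : Fin s}
    (hia : (i:ℕ) = s + (a:ℕ)) : (lperm s β i : ℕ) = β.symm a := lfun_hi hia

lemma lperm_inv {s : ℕ} (β : Equiv.Perm (Fin s)) : IsInvolution (lperm s β) :=
  fun i => lfun_lfun β i

lemma lperm_fix {s : ℕ} (β : Equiv.Perm (Fin s)) : fixCount (lperm s β) = 0 := by
  rw [fixCount, Finset.card_eq_zero, Finset.filter_eq_empty_iff]
  intro x _
  intro hx
  have hxv := congrArg Fin.val hx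
  by_cases h : (x:ℕ) < s
  · set a : Fin s := ⟨(x:ℕ), h⟩
    have hv : (lperm s β x : ℕ) = s + β a := lperm_lo rfl
    omega
  · set a : Fin s := ⟨(x:ℕ)-s, by have := x.isLt; omega⟩ with ha
    have hav : (a:ℕ) = (x:ℕ)-s := rfl
    have hv : (lperm s β x : ℕ) = β.symm a := lperm_hi (by omega)
    have := (β.symm a).isLt
    omega

lemma lperm_av {s : ℕ} {β : Equiv.Perm (Fin s)} (hβ : Avoids132 β) :
    Avoids132 (lperm s β) := by
  rintro ⟨i, j, k, hij, hjk, h1, h2⟩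
  rw [Fin.lt_def] at hij hjk h1 h2
  by_cases hk : (k:ℕ) < s
  · set ai : Fin s := ⟨(i:ℕ), by omega⟩
    set aj : Fin s := ⟨(j:ℕ), by omega⟩
    set ak : Fin s := ⟨(k:ℕ), by omega⟩
    have e1 : (lperm s β i : ℕ) = s + β ai := lperm_lo rfl
    have e2 : (lperm s β j : ℕ) = s + β aj := lperm_lo rfl
    have e3 : (lperm s β k : ℕ) = s + β ak := lperm_lo rfl
    exact hβ ⟨ai, aj, ak, by rw [Fin.lt_def]; exact hij, by rw [Fin.lt_def]; exact hjk,
      by rw [Fin.lt_def]; omega, by rw [Fin.lt_def]; omega⟩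
  · set ak : Fin s := ⟨(k:ℕ)-s, by have := k.isLt; omega⟩ with hak
    have hakv : (ak:ℕ) = (k:ℕ)-s := rfl
    have e3 : (lperm s β k : ℕ) = β.symm ak := lperm_hi (by omega)
    have hbs := (β.symm ak).isLt
    have hi : s ≤ (i:ℕ) := by
      by_contra hcon
      push_neg at hcon
      set ai : Fin s := ⟨(i:ℕ), hcon⟩
      have e1 : (lperm s β i : ℕ) = s + β ai := lperm_lo rfl
      omega
    set ai : Fin s := ⟨(i:ℕ)-s, by have := i.isLt; omega⟩ with hai
    have haiv : (ai:ℕ) = (i:ℕ)-s := rfl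
    set aj : Fin s := ⟨(j:ℕ)-s, by have := j.isLt; omega⟩ with haj
    have hajv : (aj:ℕ) = (j:ℕ)-s := rfl
    have e1 : (lperm s β i : ℕ) = β.symm ai := lperm_hi (by omega)
    have e2 : (lperm s β j : ℕ) = β.symm aj := lperm_hi (by omega)
    exact (avoids_symm hβ) ⟨ai, aj, ak, by rw [Fin.lt_def]; omega, by rw [Fin.lt_def]; omega,
      by rw [Fin.lt_def]; omega, by rw [Fin.lt_def]; omega⟩

lemma lperm_injective {s : ℕ} : Function.Injective (lperm s) := by
  intro β β' h
  apply Equiv.ext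
  intro a
  have ha := a.isLt
  set x : Fin (2*s) := ⟨(a:ℕ), by omega⟩
  have e1 : (lperm s β x : ℕ) = s + β a := lperm_lo rfl
  have e2 : (lperm s β' x : ℕ) = s + β' a := lperm_lo rfl
  rw [h] at e1
  exact Fin.ext (by omega)

/-! ### the half-half lemma for fixed point free avoiding involutions -/

lemma ca : ∀ (N : ℕ) (π : Equiv.Perm (Fin N)), IsInvolution π → Avoids132 π →
    fixCount π = 0 → ∀ i : Fin N,
    (2*(i:ℕ) < N → N ≤ 2*(π i : ℕ)) ∧ (N ≤ 2*(i:ℕ) → 2*(π i : ℕ) < N) := by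
  intro N
  induction N using Nat.strong_induction_on with
  | _ N IH =>
  intro π hInv hAv hfix i
  have hN : 1 ≤ N := by have := i.isLt; omega
  have hlastne : (π ⟨N-1, by omega⟩ : ℕ) ≠ N-1 := by
    intro h
    have hfx : π ⟨N-1, by omega⟩ = ⟨N-1, by omega⟩ := Fin.ext h
    have hmem : (⟨N-1, by omega⟩ : Fin N) ∈
        Finset.univ.filter (fun x : Fin N => π x = x) :=
      Finset.mem_filter.mpr ⟨Finset.mem_univ _, hfx⟩
    have := Finset.card_pos.mpr ⟨_, hmem⟩
    rw [fixCount] at hfix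
    omega
  obtain ⟨t, ht, β, μ, rfl⟩ := struct hN π hInv hAv hlastne
  have hμInv : IsInvolution μ := build_inv_rev hInv
  have hμAv : Avoids132 μ := build_av_rev_μ hAv
  have hμfix : fixCount μ = 0 := by rw [← build_fix (ht := ht) (β := β)]; exact hfix
  by_cases c1 : (i:ℕ) < t
  · set a : Fin t := ⟨(i:ℕ), c1⟩
    have e := build_P (n := N) (t := t) (ht := ht) (β := β) (μ := μ) (a := a)
      (i := i) rfl
    have := (β a).isLt
    constructor <;> intro h <;> omega
  · by_cases c2 : (i:ℕ) = t
    · have e := build_T (n := N) (t := t) (ht := ht) (β := β) (μ := μ) (i := i) c2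
      constructor <;> intro h <;> omega
    · by_cases c3 : (i:ℕ) < N-1-t
      · set j : Fin (N-2-2*t) := ⟨(i:ℕ)-(t+1), by omega⟩ with hj
        have hjv : (j:ℕ) = (i:ℕ)-(t+1) := rfl
        have e := build_M (n := N) (t := t) (ht := ht) (β := β) (μ := μ) (i := i)
          (j := j) (by omega)
        obtain ⟨ih1, ih2⟩ := IH (N-2-2*t) (by omega) μ hμInv hμAv hμfix j
        have := (μ j).isLt
        constructor <;> intro h
        · have := ih1 (by omega); omega
        · have := ih2 (by omega); omega
      · by_cases c4 : (i:ℕ) < N-1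
        · set a : Fin t := ⟨(i:ℕ)-(N-1-t), by omega⟩ with ha
          have hav : (a:ℕ) = (i:ℕ)-(N-1-t) := rfl
          have e := build_V (n := N) (t := t) (ht := ht) (β := β) (μ := μ) (i := i)
            (a := a) (by omega)
          have := (β.symm a).isLt
          constructor <;> intro h <;> omega
        · have hiv : (i:ℕ) = N-1 := by have := i.isLt; omega
          have e := build_L (n := N) (t := t) (ht := ht) (β := β) (μ := μ) (i := i) hiv
          constructor <;> intro h <;> omega

/-- counting 132-avoiding permutations by FPF avoiding involutions of doubled size -/
lemma cc_eq (s : ℕ) :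
    (Finset.univ.filter fun π : Equiv.Perm (Fin (2*s)) =>
      IsInvolution π ∧ Avoids132 π ∧ fixCount π = 0).card
    = (Finset.univ.filter fun β : Equiv.Perm (Fin s) => Avoids132 β).card := by
  symm
  apply Finset.card_bij (fun β _ => lperm s β)
  · intro β hβ
    rw [Finset.mem_filter] at hβ ⊢
    exact ⟨Finset.mem_univ _, lperm_inv β, lperm_av hβ.2, lperm_fix β⟩
  · intro a ha b hb hab
    exact lperm_injective hab
  · intro π hπ
    rw [Finset.mem_filter] at hπ
    obtain ⟨-, hInv, hAv, hfix⟩ := hπ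
    have hca := ca (2*s) π hInv hAv hfix
    -- extract β
    set e0 : Fin s → Fin (2*s) := fun a => ⟨(a:ℕ), by have := a.isLt; omega⟩ with he0
    have he0v : ∀ a : Fin s, ((e0 a : Fin (2*s)) : ℕ) = (a:ℕ) := fun a => rfl
    have hbnd : ∀ a : Fin s, s ≤ (π (e0 a) : ℕ) ∧ (π (e0 a) : ℕ) < 2*s := by
      intro a
      have h1 := (hca (e0 a)).1 (by rw [he0v]; have := a.isLt; omega)
      have h2 := (π (e0 a)).isLt
      omega
    set gb : Fin s → Fin s := fun a => ⟨(π (e0 a) : ℕ) - s, by have := hbnd a; omega⟩ with hgb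
    have hgbv : ∀ a, ((gb a : Fin s) : ℕ) = (π (e0 a) : ℕ) - s := fun a => rfl
    have hgbinj : Function.Injective gb := by
      intro a b hab
      have h1 := hbnd a
      have h2 := hbnd b
      have h3 := congrArg Fin.val hab
      rw [hgbv, hgbv] at h3
      have he : π (e0 a) = π (e0 b) := Fin.ext (by omega)
      have h4 := congrArg Fin.val (π.injective he)
      rw [he0v, he0v] at h4
      exact Fin.ext h4
    set β := mkPerm gb hgbinj with hβdef
    have hβv : ∀ a, ((β a : Fin s) : ℕ) = (π (e0 a) : ℕ) - s := fun a => rfl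
    refine ⟨β, Finset.mem_filter.mpr ⟨Finset.mem_univ _, ?_⟩, ?_⟩
    · -- β avoids 132
      rintro ⟨a, b, c, hab, hbc, h1, h2⟩
      rw [Fin.lt_def] at hab hbc h1 h2
      rw [hβv, hβv] at h1 h2
      have hba := hbnd a
      have hbb := hbnd b
      have hbc2 := hbnd c
      apply hAv
      refine ⟨e0 a, e0 b, e0 c, by rw [Fin.lt_def, he0v, he0v]; exact hab,
        by rw [Fin.lt_def, he0v, he0v]; exact hbc, by rw [Fin.lt_def]; omega,
        by rw [Fin.lt_def]; omega⟩
    · -- lperm s β = π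
      apply Equiv.ext
      intro i
      apply Fin.ext
      by_cases h : (i:ℕ) < s
      · set a : Fin s := ⟨(i:ℕ), h⟩ with hadef
        rw [lperm_lo (a := a) rfl]
        have hb := hβv a
        have he0a : e0 a = i := Fin.ext (he0v a)
        have h10 : (π (e0 a) : ℕ) = (π i : ℕ) := by rw [he0a]
        have := hbnd a
        omega
      · set a : Fin s := ⟨(i:ℕ)-s, by have := i.isLt; omega⟩ with hadef
        have hav : (a:ℕ) = (i:ℕ)-s := rfl
        rw [lperm_hi (a := a) (by omega)]
        have hpis : (π i : ℕ) < s := by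
          have h2 := (hca i).2 (by omega)
          omega
        set b : Fin s := ⟨(π i : ℕ), hpis⟩ with hbdef
        have hbv : (b:ℕ) = (π i : ℕ) := rfl
        have hgb2 := hβv b
        have he0b : e0 b = π i := Fin.ext (by rw [he0v])
        have h10 : (π (e0 b) : ℕ) = (π (π i) : ℕ) := by rw [he0b]
        have h11 := congrArg Fin.val (hInv i)
        have hba : β b = a := Fin.ext (by omega)
        have hsymm : β.symm a = b := by rw [← hba, Equiv.symm_apply_apply]
        rw [hsymm]
/-! ### counting -/

noncomputable def ff (n p : ℕ) : ℕ :=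
  (Finset.univ.filter fun π : Equiv.Perm (Fin n) =>
    IsInvolution π ∧ Avoids132 π ∧ fixCount π = p).card

noncomputable def cc (s : ℕ) : ℕ :=
  (Finset.univ.filter fun β : Equiv.Perm (Fin s) => Avoids132 β).card

lemma cc_eq_ff (s : ℕ) : cc s = ff (2*s) 0 := (cc_eq s).symm

lemma ff_rec (n p : ℕ) :
    ff (n+1) p = (match p with | 0 => 0 | p'+1 => ff n p')
      + ∑ t ∈ Finset.range ((n+1)/2), cc t * ff (n-1-2*t) p := by
  rw [ff]
  rw [Finset.card_eq_sum_card_fiberwise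
      (f := fun π : Equiv.Perm (Fin (n+1)) => ((π ⟨n, Nat.lt_succ_self n⟩ : Fin (n+1)) : ℕ))
      (t := Finset.range (n+1))
      (fun x _ => Finset.mem_range.mpr (x ⟨n, Nat.lt_succ_self n⟩).isLt)]
  rw [Finset.sum_range_succ]
  have hlastfib : ((Finset.univ.filter fun π : Equiv.Perm (Fin (n+1)) =>
        IsInvolution π ∧ Avoids132 π ∧ fixCount π = p).filter
          fun π => ((π ⟨n, Nat.lt_succ_self n⟩ : Fin (n+1)) : ℕ) = n).card
      = (match p with | 0 => 0 | p'+1 => ff n p') := by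
    rcases p with _ | p'
    · show _ = 0
      rw [Finset.card_eq_zero, Finset.eq_empty_iff_forall_notMem]
      intro π hπ
      rw [Finset.mem_filter, Finset.mem_filter] at hπ
      obtain ⟨⟨-, hInv, hAv, hfix⟩, hl⟩ := hπ
      have hfx : π ⟨n, Nat.lt_succ_self n⟩ = ⟨n, Nat.lt_succ_self n⟩ := Fin.ext hl
      have hmem : (⟨n, Nat.lt_succ_self n⟩ : Fin (n+1)) ∈
          Finset.univ.filter (fun x : Fin (n+1) => π x = x) :=
        Finset.mem_filter.mpr ⟨Finset.mem_univ _, hfx⟩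
      have := Finset.card_pos.mpr ⟨_, hmem⟩
      rw [fixCount] at hfix
      omega
    · show _ = ff n p'
      symm
      rw [ff]
      apply Finset.card_bij (fun σ _ => eperm σ)
      · intro σ hσ
        rw [Finset.mem_filter] at hσ
        obtain ⟨-, hInv, hAv, hfix⟩ := hσ
        rw [Finset.mem_filter, Finset.mem_filter]
        refine ⟨⟨Finset.mem_univ _, eperm_inv σ hInv, eperm_av σ hAv, ?_⟩, ?_⟩
        · rw [eperm_fix, hfix]
        · rw [eperm_last σ (by show ¬ (n < n); omega)]
      · intro a ha b hb hab
        exact eperm_injective hab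
      · intro π hπ
        rw [Finset.mem_filter, Finset.mem_filter] at hπ
        obtain ⟨⟨-, hInv, hAv, hfix⟩, hl⟩ := hπ
        refine ⟨rperm π hl, ?_, eperm_rperm π hl⟩
        rw [Finset.mem_filter]
        have hInv' : IsInvolution (rperm π hl) :=
          eperm_inv_rev _ (by rw [eperm_rperm]; exact hInv)
        have hAv' : Avoids132 (rperm π hl) :=
          eperm_av_rev _ (by rw [eperm_rperm]; exact hAv)
        have hfix' := eperm_fix (rperm π hl)
        rw [eperm_rperm π hl, hfix] at hfix'
        exact ⟨Finset.mem_univ _, hInv', hAv', by omega⟩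
  have hsum : ∑ v ∈ Finset.range n,
      ((Finset.univ.filter fun π : Equiv.Perm (Fin (n+1)) =>
        IsInvolution π ∧ Avoids132 π ∧ fixCount π = p).filter
          fun π => ((π ⟨n, Nat.lt_succ_self n⟩ : Fin (n+1)) : ℕ) = v).card
      = ∑ t ∈ Finset.range ((n+1)/2), cc t * ff (n-1-2*t) p := by
    rw [← Finset.sum_subset (show Finset.range ((n+1)/2) ⊆ Finset.range n by
        intro v hv; rw [Finset.mem_range] at hv ⊢; omega)]
    · -- termwise
      apply Finset.sum_congr rfl
      intro v hv
      rw [Finset.mem_range] at hv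
      have hv2 : 2*v+2 ≤ n+1 := by omega
      rw [cc, ff, ← Finset.card_product]
      symm
      apply Finset.card_bij (fun bm _ => build (n+1) v hv2 bm.1 bm.2)
      · rintro ⟨β, μ⟩ hbm
        rw [Finset.mem_product, Finset.mem_filter, Finset.mem_filter] at hbm
        obtain ⟨⟨-, hβ⟩, -, hμInv, hμAv, hμfix⟩ := hbm
        rw [Finset.mem_filter, Finset.mem_filter]
        refine ⟨⟨Finset.mem_univ _, build_inv hμInv, build_av hβ hμAv, ?_⟩, ?_⟩
        · rw [build_fix]; exact hμfix
        · exact build_L (show ((⟨n, Nat.lt_succ_self n⟩ : Fin (n+1)) : ℕ) = n+1-1 from by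
            show n = n+1-1; omega)
      · rintro ⟨β, μ⟩ ha ⟨β', μ'⟩ hb hab
        obtain ⟨h1, h2⟩ := build_inj hab
        rw [Prod.mk.injEq]
        exact ⟨h1, h2⟩
      · intro π hπ
        rw [Finset.mem_filter, Finset.mem_filter] at hπ
        obtain ⟨⟨-, hInv, hAv, hfix⟩, hl⟩ := hπ
        have hlast : (π ⟨n+1-1, by omega⟩ : ℕ) ≠ n+1-1 := by
          have hsame : (⟨n+1-1, by omega⟩ : Fin (n+1)) = ⟨n, Nat.lt_succ_self n⟩ := rfl
          rw [hsame, hl]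
          omega
        obtain ⟨t', ht', β, μ, hbuild⟩ := struct (by omega) π hInv hAv hlast
        have htv : t' = v := by
          have h1 : (π ⟨n, Nat.lt_succ_self n⟩ : ℕ) = t' := by
            rw [hbuild]
            exact build_L (show ((⟨n, Nat.lt_succ_self n⟩ : Fin (n+1)) : ℕ) = n+1-1 from by
              show n = n+1-1; omega)
          omega
        subst htv
        refine ⟨(β, μ), ?_, ?_⟩
        · rw [Finset.mem_product, Finset.mem_filter, Finset.mem_filter]
          have hAvβ : Avoids132 β := build_av_rev_β (hbuild ▸ hAv)
          have hμInv : IsInvolution μ := build_inv_rev (hbuild ▸ hInv)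
          have hμAv : Avoids132 μ := build_av_rev_μ (hbuild ▸ hAv)
          have hμfix : fixCount μ = p := by
            rw [← build_fix (ht := ht') (β := β), ← hbuild]
            exact hfix
          exact ⟨⟨Finset.mem_univ _, hAvβ⟩, Finset.mem_univ _, hμInv, hμAv, hμfix⟩
        · rw [hbuild]
    · -- vanishing fibers
      intro v hv hv2
      rw [Finset.mem_range] at hv hv2
      push_neg at hv2
      rw [Finset.card_eq_zero, Finset.eq_empty_iff_forall_notMem]
      intro π hπ
      rw [Finset.mem_filter, Finset.mem_filter] at hπ
      obtain ⟨⟨-, hInv, hAv, hfix⟩, hl⟩ := hπ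
      have hlast : (π ⟨n+1-1, by omega⟩ : ℕ) ≠ n+1-1 := by
        have hsame : (⟨n+1-1, by omega⟩ : Fin (n+1)) = ⟨n, Nat.lt_succ_self n⟩ := rfl
        rw [hsame, hl]
        omega
      obtain ⟨t', ht', β, μ, hbuild⟩ := struct (by omega) π hInv hAv hlast
      have h1 : (π ⟨n, Nat.lt_succ_self n⟩ : ℕ) = t' := by
        rw [hbuild]
        exact build_L (show ((⟨n, Nat.lt_succ_self n⟩ : Fin (n+1)) : ℕ) = n+1-1 from by
          show n = n+1-1; omega)
      omega
  rw [hlastfib, hsum, add_comm]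

lemma ff_eq_bal : ∀ n p, ff n p = bal n p := by
  intro n
  induction n using Nat.strong_induction_on with
  | _ n IH =>
  intro p
  rcases n with _ | m
  · -- n = 0
    rcases p with _ | p'
    · rw [ff, Finset.filter_true_of_mem, Finset.card_univ]
      · have h1 : Fintype.card (Equiv.Perm (Fin 0)) = 1 := by
          rw [Fintype.card_perm]
          simp
        rw [h1, bal]
        rw [if_pos (by omega)]
        simp
      · intro π _
        refine ⟨fun i => i.elim0, ?_, ?_⟩
        · rintro ⟨i, -, -, -⟩
          exact i.elim0
        · rw [fixCount]
          simp
    · rw [bal_eq_zero_of_lt (by omega), ff, Finset.card_eq_zero,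
        Finset.eq_empty_iff_forall_notMem]
      intro π hπ
      rw [Finset.mem_filter] at hπ
      obtain ⟨-, -, -, hfix⟩ := hπ
      rw [fixCount] at hfix
      simp at hfix
  · rw [ff_rec m p, bal_main m p]
    congr 1
    · rcases p with _ | p'
      · rfl
      · exact IH m (by omega) p'
    · apply Finset.sum_congr rfl
      intro t htm
      rw [Finset.mem_range] at htm
      rw [cc_eq_ff t, IH (2*t) (by omega) 0, IH (m-1-2*t) (by omega) p]

theorem stmt1 (n p : ℕ) (hpn : p ≤ n) (hpar : p % 2 = n % 2) :
    Nat.card {π : Equiv.Perm (Fin n) // IsInvolution π ∧ Avoids132 π ∧ fixCount π = p} =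
      Nat.choose n ((n + p) / 2) - Nat.choose n ((n + p) / 2 + 1) := by
  have h1 : Nat.card {π : Equiv.Perm (Fin n) //
      IsInvolution π ∧ Avoids132 π ∧ fixCount π = p} = ff n p := by
    rw [Nat.card_eq_fintype_card, Fintype.card_subtype, ff]
  rw [h1, ff_eq_bal n p, bal, if_pos ⟨hpn, hpar⟩]
end

section
/- The number of involutions of length 2n avoiding 132 and having no fixed points equals the n-th Catalan number C_n = (1/(n+1))·C(2n,n). -/
set_option maxHeartbeats 2000000


lemma avoids_inv {n : ℕ} {σ : Equiv.Perm (Fin n)} (h : Avoids132 σ) : Avoids132 σ⁻¹ := by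
  rintro ⟨i, j, k, hij, hjk, h1, h2⟩
  refine h ⟨σ⁻¹ i, σ⁻¹ k, σ⁻¹ j, h1, h2, ?_, ?_⟩ <;> simp [hij, hjk]

def glueInvF {n : ℕ} (σ : Equiv.Perm (Fin n)) : Fin (2*n) → Fin (2*n) := fun i =>
  if h : (i:ℕ) < n then
    ⟨n + σ ⟨i, h⟩, by have := (σ ⟨i, h⟩).isLt; omega⟩
  else
    ⟨σ⁻¹ ⟨(i:ℕ) - n, by have := i.isLt; omega⟩, by
      have := (σ⁻¹ (⟨(i:ℕ) - n, by have := i.isLt; omega⟩ : Fin n)).isLt; omega⟩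

lemma glueInvF_involutive {n : ℕ} (σ : Equiv.Perm (Fin n)) :
    Function.Involutive (glueInvF σ) := by
  intro i
  unfold glueInvF
  by_cases h : (i:ℕ) < n
  · rw [dif_pos h]
    have h2 : ¬ ((n + (σ ⟨(i:ℕ), h⟩ : ℕ)) < n) := by omega
    rw [dif_neg h2]
    apply Fin.ext
    have he : (⟨n + (σ ⟨(i:ℕ), h⟩ : ℕ) - n, by have := (σ ⟨(i:ℕ), h⟩).isLt; omega⟩ : Fin n)
        = σ ⟨(i:ℕ), h⟩ := Fin.ext (by simp)
    simp only [he, Equiv.Perm.inv_def, Equiv.symm_apply_apply]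
  · rw [dif_neg h]
    have h2 : ((σ⁻¹ (⟨(i:ℕ) - n, by have := i.isLt; omega⟩ : Fin n) : ℕ)) < n :=
      (σ⁻¹ _).isLt
    rw [dif_pos h2]
    apply Fin.ext
    have he : (⟨((σ⁻¹ (⟨(i:ℕ) - n, by have := i.isLt; omega⟩ : Fin n) : ℕ)), h2⟩ : Fin n)
        = σ⁻¹ ⟨(i:ℕ) - n, by have := i.isLt; omega⟩ := Fin.ext rfl
    simp only [he]; simp only [Equiv.Perm.inv_def, Equiv.apply_symm_apply]
    have := i.isLt
    omega

def glue2 {n : ℕ} (σ : Equiv.Perm (Fin n)) : Equiv.Perm (Fin (2*n)) :=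
  (glueInvF_involutive σ).toPerm

@[simp] lemma glue2_apply {n : ℕ} (σ : Equiv.Perm (Fin n)) (i : Fin (2*n)) :
    glue2 σ i = glueInvF σ i := rfl

lemma glue2_inv {n : ℕ} (σ : Equiv.Perm (Fin n)) : IsInvolution (glue2 σ) :=
  fun i => glueInvF_involutive σ i

lemma glue2_fpf {n : ℕ} (σ : Equiv.Perm (Fin n)) : ∀ i, glue2 σ i ≠ i := by
  intro i h
  rw [glue2_apply] at h
  have hv := congrArg (Fin.val) h
  unfold glueInvF at hv
  by_cases hi : (i:ℕ) < n
  · rw [dif_pos hi] at hv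
    simp at hv
    omega
  · rw [dif_neg hi] at hv
    have := (σ⁻¹ (⟨(i:ℕ) - n, by have := i.isLt; omega⟩ : Fin n)).isLt
    simp at hv
    omega

lemma glue2_lower {n : ℕ} (σ : Equiv.Perm (Fin n)) (i : Fin (2*n)) (h : (i:ℕ) < n) :
    n ≤ (glue2 σ i : ℕ) := by
  rw [glue2_apply]; unfold glueInvF; rw [dif_pos h]; simp

lemma glue2_lower_val {n : ℕ} (σ : Equiv.Perm (Fin n)) (i : Fin (2*n)) (h : (i:ℕ) < n) :
    (glue2 σ i : ℕ) = n + σ ⟨(i:ℕ), h⟩ := by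
  rw [glue2_apply]; unfold glueInvF; rw [dif_pos h]

lemma glue2_upper {n : ℕ} (σ : Equiv.Perm (Fin n)) (i : Fin (2*n)) (h : ¬ (i:ℕ) < n) :
    (glue2 σ i : ℕ) < n := by
  rw [glue2_apply]; unfold glueInvF; rw [dif_neg h]
  exact (σ⁻¹ _).isLt

lemma glue2_upper_val {n : ℕ} (σ : Equiv.Perm (Fin n)) (i : Fin (2*n)) (h : ¬ (i:ℕ) < n) :
    (glue2 σ i : ℕ) = σ⁻¹ ⟨(i:ℕ) - n, by have := i.isLt; omega⟩ := by
  rw [glue2_apply]; unfold glueInvF; rw [dif_neg h]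

lemma glue2_avoids {n : ℕ} {σ : Equiv.Perm (Fin n)} (hσ : Avoids132 σ) :
    Avoids132 (glue2 σ) := by
  rintro ⟨i, j, k, hij, hjk, h1, h2⟩
  by_cases hk : (k:ℕ) < n
  · -- all three < n
    have hj' : (j:ℕ) < n := lt_trans hjk hk
    have hi' : (i:ℕ) < n := lt_trans hij hj'
    refine hσ ⟨⟨i, hi'⟩, ⟨j, hj'⟩, ⟨k, hk⟩, hij, hjk, ?_, ?_⟩
    · have := glue2_lower_val σ i hi'; have := glue2_lower_val σ k hk
      rw [Fin.lt_def] at h1 ⊢; omega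
    · have := glue2_lower_val σ j hj'; have := glue2_lower_val σ k hk
      rw [Fin.lt_def] at h2 ⊢; omega
  · by_cases hi : (i:ℕ) < n
    · have := glue2_lower σ i hi
      have := glue2_upper σ k hk
      rw [Fin.lt_def] at h1; omega
    · have hj : ¬ (j:ℕ) < n := by rw [Fin.lt_def] at hij; omega
      have e1 := glue2_upper_val σ i hi
      have e2 := glue2_upper_val σ j hj
      have e3 := glue2_upper_val σ k hk
      rw [Fin.lt_def, e1, e3] at h1
      rw [Fin.lt_def, e3, e2] at h2
      have hi2 := i.isLt
      have hj2 := j.isLt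
      have hk2 := k.isLt
      refine avoids_inv hσ ⟨⟨(i:ℕ) - n, by omega⟩, ⟨(j:ℕ) - n, by omega⟩,
        ⟨(k:ℕ) - n, by omega⟩, ?_, ?_, ?_, ?_⟩
      · rw [Fin.lt_def] at hij ⊢; simp; omega
      · rw [Fin.lt_def] at hjk ⊢; simp; omega
      · rw [Fin.lt_def]; exact h1
      · rw [Fin.lt_def]; exact h2

lemma opener_lt_closer {n : ℕ} {π : Equiv.Perm (Fin n)} (hinv : IsInvolution π)
    (hav : Avoids132 π) {i j : Fin n} (hi : π i < i) (hj : j < π j) : j < i := by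
  by_contra hc
  push_neg at hc
  have hne : i ≠ j := by rintro rfl; exact absurd (hi.trans hj) (lt_irrefl _)
  have hij : i < j := lt_of_le_of_ne hc hne
  exact hav ⟨π i, j, π j, hi.trans_le hc, hj, by rw [hinv, hinv]; exact hij, by rw [hinv]; exact hj⟩

open Finset in
lemma lower_half {n : ℕ} {π : Equiv.Perm (Fin (2*n))} (hinv : IsInvolution π)
    (hav : Avoids132 π) (hfpf : ∀ i, π i ≠ i) (i : Fin (2*n)) :
    (i:ℕ) < n ↔ i < π i := by
  set O : Finset (Fin (2*n)) := univ.filter (fun i => i < π i) with hO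
  set C : Finset (Fin (2*n)) := univ.filter (fun i => π i < i) with hC
  have hmemO : ∀ j, j ∈ O ↔ j < π j := by intro j; simp [hO]
  have hmemC : ∀ j, j ∈ C ↔ π j < j := by intro j; simp [hC]
  have himg : C = O.image π := by
    ext c
    simp only [mem_image, hmemO, hmemC]
    constructor
    · intro hc
      exact ⟨π c, by rw [hinv]; exact hc, hinv c⟩
    · rintro ⟨o, ho, rfl⟩
      rw [hinv]; exact ho
  have hcardeq : O.card = C.card := by
    rw [himg, Finset.card_image_of_injective _ π.injective]
  have hsplit : O.card + C.card = 2 * n := by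
    have : C = univ.filter (fun i => ¬ i < π i) := by
      ext j
      simp only [hmemC, mem_filter, mem_univ, true_and]
      constructor
      · intro h; exact not_lt_of_gt h
      · intro h; exact lt_of_le_of_ne (not_lt.mp h) (hfpf j)
    rw [hO, this, Finset.card_filter_add_card_filter_not, Finset.card_univ,
      Fintype.card_fin]
  have hOn : O.card = n := by omega
  constructor
  · intro hlt
    by_contra hc
    have hic : π i < i := lt_of_le_of_ne (not_lt.mp hc) (hfpf i)
    have hsub : Finset.Ici i ⊆ C := by
      intro j hj
      rw [Finset.mem_Ici] at hj
      rw [hmemC]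
      rcases lt_trichotomy (π j) j with h | h | h
      · exact h
      · exact absurd h (hfpf j)
      · exact absurd (opener_lt_closer hinv hav hic h) (not_lt.mpr hj)
    have := Finset.card_le_card hsub
    rw [Fin.card_Ici] at this
    omega
  · intro hlt
    by_contra hc
    push_neg at hc
    have hsub : Finset.Iic i ⊆ O := by
      intro j hj
      rw [Finset.mem_Iic] at hj
      rw [hmemO]
      rcases lt_trichotomy (π j) j with h | h | h
      · exact absurd (opener_lt_closer hinv hav h hlt) (not_lt.mpr hj)
      · exact absurd h (hfpf j)
      · exact h
    have := Finset.card_le_card hsub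
    rw [Fin.card_Iic] at this
    omega

instance {n : ℕ} : DecidablePred (@Avoids132 n) := fun σ =>
  decidable_of_iff (¬ ∃ i j k : Fin n, i < j ∧ j < k ∧ σ i < σ k ∧ σ k < σ j) Iff.rfl

abbrev AvT (n : ℕ) := {σ : Equiv.Perm (Fin n) // Avoids132 σ}

def decode2 {n : ℕ} (σ : AvT n) :
    {π : Equiv.Perm (Fin (2*n)) // IsInvolution π ∧ Avoids132 π ∧ ∀ i, π i ≠ i} :=
  ⟨glue2 σ.1, glue2_inv σ.1, glue2_avoids σ.2, glue2_fpf σ.1⟩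

lemma decode2_bijective (n : ℕ) : Function.Bijective (@decode2 n) := by
  constructor
  · intro σ τ h
    have h' : glue2 σ.1 = glue2 τ.1 := congrArg Subtype.val h
    apply Subtype.ext
    apply Equiv.ext
    intro a
    have ha : (a:ℕ) < n := a.isLt
    have h2 := congrArg (fun π : Equiv.Perm (Fin (2*n)) => (π ⟨(a:ℕ), by omega⟩ : ℕ)) h'
    rw [glue2_lower_val σ.1 _ ha, glue2_lower_val τ.1 _ ha] at h2
    simp only [Fin.val_mk] at h2
    have : σ.1 ⟨(a:ℕ), ha⟩ = τ.1 ⟨(a:ℕ), ha⟩ := Fin.ext (by omega)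
    simpa using this
  · rintro ⟨π, hinv, hav, hfpf⟩
    -- upper/lower structure
    have key : ∀ i : Fin (2*n), (i:ℕ) < n → n ≤ (π i : ℕ) := by
      intro i hi
      have h1 : i < π i := (lower_half hinv hav hfpf i).mp hi
      by_contra hc
      push_neg at hc
      have h2 := (lower_half hinv hav hfpf (π i)).mp hc
      rw [hinv] at h2
      exact absurd (h1.trans h2) (lt_irrefl _)
    have key2 : ∀ i : Fin (2*n), ¬ (i:ℕ) < n → (π i : ℕ) < n := by
      intro i hi
      by_contra hc
      have h1 : ¬ i < π i := fun h => hi ((lower_half hinv hav hfpf i).mpr h)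
      have h2 : ¬ π i < i := by
        intro h
        have := (lower_half hinv hav hfpf (π i)).mpr (by rw [hinv]; exact h)
        omega
      exact hfpf i (le_antisymm (not_lt.mp h1) (not_lt.mp h2))
    have hfn : ∀ a : Fin n, ((π ⟨(a:ℕ), by omega⟩ : ℕ)) - n < n := by
      intro a
      have := key ⟨(a:ℕ), by omega⟩ a.isLt
      have := (π ⟨(a:ℕ), by omega⟩).isLt
      omega
    set f : Fin n → Fin n := fun a => ⟨(π ⟨(a:ℕ), by omega⟩ : ℕ) - n, hfn a⟩ with hf
    have hfinj : Function.Injective f := by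
      intro a b hab
      have ha := key ⟨(a:ℕ), by omega⟩ a.isLt
      have hb := key ⟨(b:ℕ), by omega⟩ b.isLt
      have : (π ⟨(a:ℕ), by omega⟩ : ℕ) = (π ⟨(b:ℕ), by omega⟩ : ℕ) := by
        have := congrArg Fin.val hab
        simp only [hf] at this
        omega
      have := π.injective (Fin.ext this : π ⟨(a:ℕ), by omega⟩ = π ⟨(b:ℕ), by omega⟩)
      have := congrArg Fin.val this
      exact Fin.ext (by simpa using this)
    set σ : Equiv.Perm (Fin n) := Equiv.ofBijective f ((Finite.injective_iff_bijective).mp hfinj)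
      with hσdef
    have hσap : ∀ a : Fin n, σ a = f a := fun a => rfl
    have hσav : Avoids132 σ := by
      rintro ⟨i, j, k, hij, hjk, h1, h2⟩
      have hi := key ⟨(i:ℕ), by omega⟩ i.isLt
      have hj := key ⟨(j:ℕ), by omega⟩ j.isLt
      have hk := key ⟨(k:ℕ), by omega⟩ k.isLt
      refine hav ⟨⟨(i:ℕ), by omega⟩, ⟨(j:ℕ), by omega⟩, ⟨(k:ℕ), by omega⟩, ?_, ?_, ?_, ?_⟩
      · rw [Fin.lt_def] at hij ⊢; exact hij
      · rw [Fin.lt_def] at hjk ⊢; exact hjk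
      · rw [hσap, hσap] at h1; rw [Fin.lt_def] at h1 ⊢
        simp only [hf, Fin.val_mk] at h1; omega
      · rw [hσap, hσap] at h2; rw [Fin.lt_def] at h2 ⊢
        simp only [hf, Fin.val_mk] at h2; omega
    refine ⟨⟨σ, hσav⟩, ?_⟩
    apply Subtype.ext
    apply Equiv.ext
    intro i
    show glue2 σ i = π i
    apply Fin.ext
    by_cases hi : (i:ℕ) < n
    · rw [glue2_lower_val σ i hi]
      have : σ ⟨(i:ℕ), hi⟩ = f ⟨(i:ℕ), hi⟩ := rfl
      rw [this]
      have hik : (⟨((⟨(i:ℕ), hi⟩ : Fin n) : ℕ), by omega⟩ : Fin (2*n)) = i := Fin.ext rfl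
      simp only [hf]
      have := key i hi
      rw [show (π ⟨((⟨(i:ℕ), hi⟩ : Fin n) : ℕ), by omega⟩ : ℕ) = (π i : ℕ) from by rw [hik]]
      omega
    · rw [glue2_upper_val σ i hi]
      have hπi := key2 i hi
      have ha : σ ⟨(π i : ℕ), hπi⟩ = ⟨(i:ℕ) - n, by have := i.isLt; omega⟩ := by
        rw [hσap]
        apply Fin.ext
        simp only [hf]
        have hik : (⟨((⟨(π i : ℕ), hπi⟩ : Fin n) : ℕ), by omega⟩ : Fin (2*n)) = π i :=
          Fin.ext rfl
        rw [show (π ⟨((⟨(π i : ℕ), hπi⟩ : Fin n) : ℕ), by omega⟩ : ℕ) = (π (π i) : ℕ) from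
          by rw [hik]]
        rw [hinv]
      have : σ⁻¹ (⟨(i:ℕ) - n, by have := i.isLt; omega⟩ : Fin n) = ⟨(π i : ℕ), hπi⟩ := by
        rw [← ha, Equiv.Perm.inv_def, Equiv.symm_apply_apply]
      rw [this]

section Rec
variable {n : ℕ}

def glueF (m : Fin (n+1)) (L : Equiv.Perm (Fin m)) (R : Equiv.Perm (Fin (n - m))) :
    Fin (n+1) → Fin (n+1) := fun i =>
  if h : (i:ℕ) < m then
    ⟨n - m + L ⟨(i:ℕ), h⟩, by have := (L ⟨(i:ℕ), h⟩).isLt; have := m.isLt; omega⟩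
  else if h2 : (i:ℕ) = m then ⟨n, by omega⟩
  else
    ⟨R ⟨(i:ℕ) - (m:ℕ) - 1, by have := i.isLt; omega⟩, by
      have := (R ⟨(i:ℕ) - (m:ℕ) - 1, by have := i.isLt; omega⟩).isLt; omega⟩

variable (m : Fin (n+1)) (L : Equiv.Perm (Fin m)) (R : Equiv.Perm (Fin (n - m)))

lemma glueF_A {i : Fin (n+1)} (h : (i:ℕ) < m) :
    (glueF m L R i : ℕ) = n - (m:ℕ) + L ⟨(i:ℕ), h⟩ := by
  unfold glueF; rw [dif_pos h]

lemma glueF_B {i : Fin (n+1)} (h : (i:ℕ) = m) : (glueF m L R i : ℕ) = n := by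
  unfold glueF; rw [dif_neg (by omega), dif_pos h]

lemma glueF_C {i : Fin (n+1)} (h : (m:ℕ) < i) :
    (glueF m L R i : ℕ) = R ⟨(i:ℕ) - (m:ℕ) - 1, by have := i.isLt; omega⟩ := by
  unfold glueF; rw [dif_neg (by omega), dif_neg (by omega)]

lemma glueF_A_range {i : Fin (n+1)} (h : (i:ℕ) < m) :
    n - (m:ℕ) ≤ (glueF m L R i : ℕ) ∧ (glueF m L R i : ℕ) < n := by
  rw [glueF_A m L R h]
  have := (L ⟨(i:ℕ), h⟩).isLt
  have := m.isLt
  omega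

lemma glueF_C_range {i : Fin (n+1)} (h : (m:ℕ) < i) :
    (glueF m L R i : ℕ) < n - (m:ℕ) := by
  rw [glueF_C m L R h]
  exact (R _).isLt

lemma glueF_injective : Function.Injective (glueF m L R) := by
  intro a b hab
  have hv := congrArg Fin.val hab
  apply Fin.ext
  rcases lt_trichotomy ((a:ℕ)) ((m:ℕ)) with ha | ha | ha <;>
    rcases lt_trichotomy ((b:ℕ)) ((m:ℕ)) with hb | hb | hb
  · rw [glueF_A m L R ha, glueF_A m L R hb] at hv
    have : L ⟨(a:ℕ), ha⟩ = L ⟨(b:ℕ), hb⟩ := Fin.ext (by omega)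
    have := congrArg Fin.val (L.injective this)
    simpa using this
  · have := (glueF_A_range m L R ha).2
    rw [glueF_B m L R hb] at hv; omega
  · have h1 := (glueF_A_range m L R ha).1
    have h2 := glueF_C_range m L R hb
    omega
  · have := (glueF_A_range m L R hb).2
    rw [glueF_B m L R ha] at hv; omega
  · omega
  · have := glueF_C_range m L R hb
    rw [glueF_B m L R ha] at hv
    have := m.isLt; omega
  · have h1 := (glueF_A_range m L R hb).1
    have h2 := glueF_C_range m L R ha
    omega
  · have := glueF_C_range m L R ha
    rw [glueF_B m L R hb] at hv
    have := m.isLt; omega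
  · rw [glueF_C m L R ha, glueF_C m L R hb] at hv
    have : R ⟨(a:ℕ) - (m:ℕ) - 1, by have := a.isLt; omega⟩
        = R ⟨(b:ℕ) - (m:ℕ) - 1, by have := b.isLt; omega⟩ := Fin.ext (by omega)
    have := congrArg Fin.val (R.injective this)
    simp only [Fin.val_mk] at this
    omega

noncomputable def glueP : Equiv.Perm (Fin (n+1)) :=
  Equiv.ofBijective (glueF m L R) ((Finite.injective_iff_bijective).mp (glueF_injective m L R))

@[simp] lemma glueP_apply (i : Fin (n+1)) : glueP m L R i = glueF m L R i := rfl

lemma glueP_avoids (hL : Avoids132 L) (hR : Avoids132 R) : Avoids132 (glueP m L R) := by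
  rintro ⟨i, j, k, hij, hjk, h1, h2⟩
  rw [Fin.lt_def] at hij hjk h1 h2
  simp only [glueP_apply] at h1 h2
  rcases lt_trichotomy ((k:ℕ)) ((m:ℕ)) with hk | hk | hk
  · -- all in A
    have hj : (j:ℕ) < m := by omega
    have hi : (i:ℕ) < m := by omega
    rw [glueF_A m L R hi, glueF_A m L R hk] at h1
    rw [glueF_A m L R hk, glueF_A m L R hj] at h2
    exact hL ⟨⟨(i:ℕ), hi⟩, ⟨(j:ℕ), hj⟩, ⟨(k:ℕ), hk⟩, by rw [Fin.lt_def]; exact hij,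
      by rw [Fin.lt_def]; exact hjk, by rw [Fin.lt_def]; omega, by rw [Fin.lt_def]; omega⟩
  · -- k = m, so j in A
    have hj : (j:ℕ) < m := by omega
    have := (glueF_A_range m L R hj).2
    rw [glueF_B m L R hk] at h2
    omega
  · -- k in C
    rcases lt_trichotomy ((i:ℕ)) ((m:ℕ)) with hi | hi | hi
    · have := (glueF_A_range m L R hi).1
      have := glueF_C_range m L R hk
      omega
    · rw [glueF_B m L R hi] at h1
      have := (glueF m L R k).isLt
      omega
    · -- all in C
      have hj : (m:ℕ) < j := by omega
      rw [glueF_C m L R hi, glueF_C m L R hk] at h1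
      rw [glueF_C m L R hk, glueF_C m L R hj] at h2
      have hk2 := k.isLt
      refine hR ⟨⟨(i:ℕ) - (m:ℕ) - 1, by have := i.isLt; omega⟩,
        ⟨(j:ℕ) - (m:ℕ) - 1, by have := j.isLt; omega⟩,
        ⟨(k:ℕ) - (m:ℕ) - 1, by have := k.isLt; omega⟩, ?_, ?_, ?_, ?_⟩
      · rw [Fin.lt_def]; simp only [Fin.val_mk]; omega
      · rw [Fin.lt_def]; simp only [Fin.val_mk]; omega
      · rw [Fin.lt_def]; exact h1
      · rw [Fin.lt_def]; exact h2

end Rec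

section Enc
open Finset
variable {n : ℕ} {σ : Equiv.Perm (Fin (n+1))}

lemma enc_fact1 (hσ : Avoids132 σ) (m : Fin (n+1)) (hm : σ m = ⟨n, by omega⟩) {p q : Fin (n+1)}
    (hp : p < m) (hq : m < q) : σ q < σ p := by
  rcases lt_trichotomy (σ q) (σ p) with h | h | h
  · exact h
  · exact absurd (σ.injective h) (by rintro rfl; exact absurd (hp.trans hq) (lt_irrefl _))
  · exfalso
    refine hσ ⟨p, m, q, hp, hq, h, ?_⟩
    rw [hm, Fin.lt_def]
    have h1 : σ q ≠ ⟨n, by omega⟩ := by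
      rw [← hm]; intro hh; exact absurd (σ.injective hh) (ne_of_gt hq)
    have h2 : (σ q : ℕ) ≤ n := by have := (σ q).isLt; omega
    have h3 : (σ q : ℕ) ≠ n := fun hh => h1 (Fin.ext hh)
    simp only [Fin.val_mk]
    omega

lemma enc_fact2 (hσ : Avoids132 σ) (m : Fin (n+1)) (hm : σ m = ⟨n, by omega⟩) {p : Fin (n+1)} (hp : p < m) :
    n - (m:ℕ) ≤ (σ p : ℕ) ∧ (σ p : ℕ) < n := by
  constructor
  · have hsub : (Finset.Ioi m).image σ ⊆ Finset.Iio (σ p) := by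
      intro x hx
      simp only [Finset.mem_image, Finset.mem_Ioi] at hx
      obtain ⟨q, hq, rfl⟩ := hx
      rw [Finset.mem_Iio]
      exact enc_fact1 hσ m hm hp hq
    have := Finset.card_le_card hsub
    rw [Finset.card_image_of_injective _ σ.injective, Fin.card_Ioi, Fin.card_Iio] at this
    omega
  · have h1 : σ p ≠ ⟨n, by omega⟩ := by
      rw [← hm]; intro hh; exact absurd (σ.injective hh) (ne_of_lt hp)
    have h2 := (σ p).isLt
    have h3 : (σ p : ℕ) ≠ n := fun hh => h1 (Fin.ext hh)
    omega

lemma enc_fact3 (hσ : Avoids132 σ) (m : Fin (n+1)) (hm : σ m = ⟨n, by omega⟩) {q : Fin (n+1)} (hq : m < q) :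
    (σ q : ℕ) < n - (m:ℕ) := by
  have hsub : (Finset.Iic m).image σ ⊆ Finset.Ioi (σ q) := by
    intro x hx
    simp only [Finset.mem_image, Finset.mem_Iic] at hx
    obtain ⟨p, hp, rfl⟩ := hx
    rw [Finset.mem_Ioi]
    rcases lt_or_eq_of_le hp with h | h
    · exact enc_fact1 hσ m hm h hq
    · subst h
      rw [hm, Fin.lt_def]
      have h1 : σ q ≠ ⟨n, by omega⟩ := by
        rw [← hm]; intro hh; exact absurd (σ.injective hh) (ne_of_gt hq)
      have h2 := (σ q).isLt
      have h3 : (σ q : ℕ) ≠ n := fun hh => h1 (Fin.ext hh)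
      simp only [Fin.val_mk]
      omega
  have := Finset.card_le_card hsub
  rw [Finset.card_image_of_injective _ σ.injective, Fin.card_Iic, Fin.card_Ioi] at this
  omega

end Enc

section Count
variable {n : ℕ}

noncomputable def decode1 (x : Σ m : Fin (n+1), AvT (m:ℕ) × AvT (n - (m:ℕ))) : AvT (n+1) :=
  ⟨glueP x.1 x.2.1.1 x.2.2.1, glueP_avoids x.1 x.2.1.1 x.2.2.1 x.2.1.2 x.2.2.2⟩

lemma decode1_bijective : Function.Bijective (@decode1 n) := by
  constructor
  · rintro ⟨m, ⟨L, hL⟩, ⟨R, hR⟩⟩ ⟨m', ⟨L', hL'⟩, ⟨R', hR'⟩⟩ h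
    have hp : glueP m L R = glueP m' L' R' := congrArg Subtype.val h
    have hmm : (m:ℕ) = (m':ℕ) := by
      by_contra hne
      have h1 := congrArg (fun (π : Equiv.Perm (Fin (n+1))) => (π m : ℕ)) hp
      simp only [glueP_apply] at h1
      rw [glueF_B m L R rfl] at h1
      rcases lt_trichotomy ((m:ℕ)) ((m':ℕ)) with hc | hc | hc
      · have := (glueF_A_range m' L' R' (show ((m : Fin (n+1)):ℕ) < m' from hc)).2
        omega
      · exact hne hc
      · have := glueF_C_range m' L' R' hc
        have := m'.isLt
        omega
    have hm2 : m = m' := Fin.ext hmm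
    subst hm2
    have hLL : L = L' := by
      apply Equiv.ext; intro p
      have hplt : ((⟨(p:ℕ), by have := m.isLt; have := p.isLt; omega⟩ : Fin (n+1)) : ℕ) < m :=
        p.isLt
      have h1 := congrArg (fun (π : Equiv.Perm (Fin (n+1))) =>
        (π ⟨(p:ℕ), by have := m.isLt; have := p.isLt; omega⟩ : ℕ)) hp
      simp only [glueP_apply] at h1
      rw [glueF_A m L R hplt, glueF_A m L' R' hplt] at h1
      simp only [Fin.val_mk, Fin.eta] at h1
      exact Fin.ext (by omega)
    have hRR : R = R' := by
      apply Equiv.ext; intro q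
      have hqlt : (m:ℕ) < ((⟨(m:ℕ)+1+(q:ℕ), by have := m.isLt; have := q.isLt; omega⟩
          : Fin (n+1)) : ℕ) := by simp only [Fin.val_mk]; omega
      have h1 := congrArg (fun (π : Equiv.Perm (Fin (n+1))) =>
        (π ⟨(m:ℕ)+1+(q:ℕ), by have := m.isLt; have := q.isLt; omega⟩ : ℕ)) hp
      simp only [glueP_apply] at h1
      rw [glueF_C m L R hqlt, glueF_C m L' R' hqlt] at h1
      have e : (⟨((⟨(m:ℕ)+1+(q:ℕ), by have := m.isLt; have := q.isLt; omega⟩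
          : Fin (n+1)) : ℕ) - (m:ℕ) - 1, by have := q.isLt; omega⟩ : Fin (n - (m:ℕ))) = q :=
        Fin.ext (by simp only [Fin.val_mk]; omega)
      rw [e] at h1
      exact Fin.ext h1
    subst hLL; subst hRR
    rfl
  · rintro ⟨σ, hσ⟩
    set m : Fin (n+1) := σ.symm ⟨n, by omega⟩ with hmdef
    have hm : σ m = ⟨n, by omega⟩ := Equiv.apply_symm_apply σ _
    have hLbound : ∀ p : Fin (m:ℕ),
        (σ ⟨(p:ℕ), by have := m.isLt; have := p.isLt; omega⟩ : ℕ) - (n - (m:ℕ)) < (m:ℕ) := by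
      intro p
      have hf := enc_fact2 hσ m hm (p := ⟨(p:ℕ), by have := m.isLt; have := p.isLt; omega⟩)
        (by rw [Fin.lt_def]; exact p.isLt)
      have := m.isLt
      omega
    set Lf : Fin (m:ℕ) → Fin (m:ℕ) := fun p =>
      ⟨(σ ⟨(p:ℕ), by have := m.isLt; have := p.isLt; omega⟩ : ℕ) - (n - (m:ℕ)), hLbound p⟩
      with hLf
    have hLinj : Function.Injective Lf := by
      intro a b hab
      have ha := enc_fact2 hσ m hm (p := ⟨(a:ℕ), by have := m.isLt; have := a.isLt; omega⟩)
        (by rw [Fin.lt_def]; exact a.isLt)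
      have hb := enc_fact2 hσ m hm (p := ⟨(b:ℕ), by have := m.isLt; have := b.isLt; omega⟩)
        (by rw [Fin.lt_def]; exact b.isLt)
      have hv := congrArg Fin.val hab
      simp only [hLf, Fin.val_mk] at hv
      have : σ ⟨(a:ℕ), by have := m.isLt; have := a.isLt; omega⟩
          = σ ⟨(b:ℕ), by have := m.isLt; have := b.isLt; omega⟩ := Fin.ext (by omega)
      have := congrArg Fin.val (σ.injective this)
      exact Fin.ext (by simpa using this)
    set LP : Equiv.Perm (Fin (m:ℕ)) :=
      Equiv.ofBijective Lf ((Finite.injective_iff_bijective).mp hLinj) with hLP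
    have hLPa : ∀ p, LP p = Lf p := fun p => rfl
    have hRbound : ∀ q : Fin (n - (m:ℕ)),
        (σ ⟨(m:ℕ)+1+(q:ℕ), by have := m.isLt; have := q.isLt; omega⟩ : ℕ) < n - (m:ℕ) := by
      intro q
      exact enc_fact3 hσ m hm (by rw [Fin.lt_def]; simp only [Fin.val_mk]; omega)
    set Rf : Fin (n - (m:ℕ)) → Fin (n - (m:ℕ)) := fun q =>
      ⟨(σ ⟨(m:ℕ)+1+(q:ℕ), by have := m.isLt; have := q.isLt; omega⟩ : ℕ), hRbound q⟩ with hRf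
    have hRinj : Function.Injective Rf := by
      intro a b hab
      have hv := congrArg Fin.val hab
      simp only [hRf, Fin.val_mk] at hv
      have : σ ⟨(m:ℕ)+1+(a:ℕ), by have := m.isLt; have := a.isLt; omega⟩
          = σ ⟨(m:ℕ)+1+(b:ℕ), by have := m.isLt; have := b.isLt; omega⟩ := Fin.ext hv
      have := congrArg Fin.val (σ.injective this)
      simp only [Fin.val_mk] at this
      exact Fin.ext (by omega)
    set RP : Equiv.Perm (Fin (n - (m:ℕ))) :=
      Equiv.ofBijective Rf ((Finite.injective_iff_bijective).mp hRinj) with hRP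
    have hRPa : ∀ q, RP q = Rf q := fun q => rfl
    have hLav : Avoids132 LP := by
      rintro ⟨i, j, k, hij, hjk, h1, h2⟩
      rw [hLPa, hLPa] at h1
      rw [hLPa, hLPa] at h2
      rw [Fin.lt_def] at hij hjk h1 h2
      simp only [hLf, Fin.val_mk] at h1 h2
      have hi := enc_fact2 hσ m hm (p := ⟨(i:ℕ), by have := m.isLt; have := i.isLt; omega⟩)
        (by rw [Fin.lt_def]; exact i.isLt)
      have hj := enc_fact2 hσ m hm (p := ⟨(j:ℕ), by have := m.isLt; have := j.isLt; omega⟩)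
        (by rw [Fin.lt_def]; exact j.isLt)
      have hk := enc_fact2 hσ m hm (p := ⟨(k:ℕ), by have := m.isLt; have := k.isLt; omega⟩)
        (by rw [Fin.lt_def]; exact k.isLt)
      refine hσ ⟨⟨(i:ℕ), by have := m.isLt; have := i.isLt; omega⟩,
        ⟨(j:ℕ), by have := m.isLt; have := j.isLt; omega⟩,
        ⟨(k:ℕ), by have := m.isLt; have := k.isLt; omega⟩,
        by rw [Fin.lt_def]; exact hij, by rw [Fin.lt_def]; exact hjk,
        by rw [Fin.lt_def]; omega, by rw [Fin.lt_def]; omega⟩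
    have hRav : Avoids132 RP := by
      rintro ⟨i, j, k, hij, hjk, h1, h2⟩
      rw [hRPa, hRPa] at h1
      rw [hRPa, hRPa] at h2
      rw [Fin.lt_def] at hij hjk h1 h2
      simp only [hRf, Fin.val_mk] at h1 h2
      refine hσ ⟨⟨(m:ℕ)+1+(i:ℕ), by have := m.isLt; have := i.isLt; omega⟩,
        ⟨(m:ℕ)+1+(j:ℕ), by have := m.isLt; have := j.isLt; omega⟩,
        ⟨(m:ℕ)+1+(k:ℕ), by have := m.isLt; have := k.isLt; omega⟩,
        by rw [Fin.lt_def]; simp only [Fin.val_mk]; omega,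
        by rw [Fin.lt_def]; simp only [Fin.val_mk]; omega,
        by rw [Fin.lt_def]; exact h1, by rw [Fin.lt_def]; exact h2⟩
    refine ⟨⟨m, ⟨LP, hLav⟩, ⟨RP, hRav⟩⟩, ?_⟩
    apply Subtype.ext
    apply Equiv.ext
    intro i
    show glueP m LP RP i = σ i
    apply Fin.ext
    rcases lt_trichotomy ((i:ℕ)) ((m:ℕ)) with hi | hi | hi
    · rw [glueP_apply, glueF_A m LP RP hi, hLPa]
      simp only [hLf, Fin.val_mk]
      have hfa := enc_fact2 hσ m hm (p := ⟨(i:ℕ), by have := m.isLt; have := i.isLt; omega⟩)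
        (by rw [Fin.lt_def]; exact hi)
      have e : (⟨(i:ℕ), by have := m.isLt; have := i.isLt; omega⟩ : Fin (n+1)) = i :=
        Fin.ext rfl
      rw [e] at hfa ⊢
      omega
    · rw [glueP_apply, glueF_B m LP RP hi]
      have : i = m := Fin.ext hi
      rw [this, hm]
    · rw [glueP_apply, glueF_C m LP RP hi, hRPa]
      simp only [hRf, Fin.val_mk]
      have e : (⟨(m:ℕ)+1+((i:ℕ) - (m:ℕ) - 1), by have := i.isLt; omega⟩ : Fin (n+1)) = i :=
        Fin.ext (by simp only [Fin.val_mk]; omega)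
      rw [e]

end Count

lemma card_avt (n : ℕ) : Nat.card (AvT n) = catalan n := by
  induction n using Nat.strong_induction_on with
  | _ n ih =>
    match n, ih with
    | 0, _ =>
      haveI : Unique (AvT 0) :=
        { default := ⟨1, by rintro ⟨i, -⟩; exact i.elim0⟩
          uniq := by
            rintro ⟨σ, hσ⟩
            apply Subtype.ext
            apply Equiv.ext
            intro i
            exact i.elim0 }
      rw [Nat.card_unique, catalan_zero]
    | (k+1), ih =>
      rw [← Nat.card_eq_of_bijective decode1 (decode1_bijective (n := k))]
      rw [Nat.card_eq_fintype_card, Fintype.card_sigma, catalan_succ]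
      apply Finset.sum_congr rfl
      intro m _
      rw [Fintype.card_prod, ← Nat.card_eq_fintype_card, ← Nat.card_eq_fintype_card,
        ih (m:ℕ) (by have := m.isLt; omega), ih (k - (m:ℕ)) (by omega)]

theorem stmt2 (n : ℕ) :
    Nat.card {π : Equiv.Perm (Fin (2 * n)) //
        IsInvolution π ∧ Avoids132 π ∧ ∀ i, π i ≠ i} = catalan n :=
  (Nat.card_eq_of_bijective decode2 (decode2_bijective n)).symm.trans (card_avt n)
end

section
/- The number of involutions of length n avoiding both 132 and 123 equals 2^⌊n/2⌋ for all n ≥ 0. -/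
def Avoids123 {n : ℕ} (π : Equiv.Perm (Fin n)) : Prop :=
  ¬ ∃ i j k : Fin n, i < j ∧ j < k ∧ π i < π j ∧ π j < π k

namespace Stmt5Aux

def Q {n : ℕ} (π : Equiv.Perm (Fin n)) : Prop :=
  (∀ i, π (π i) = i) ∧ ∀ i : Fin n, n ≤ (π i).val + i.val + 2

instance {n : ℕ} : DecidablePred (Q (n := n)) := fun _ => by unfold Q; infer_instance

lemma card_filter_apply_le {n : ℕ} (π : Equiv.Perm (Fin n)) (a : Fin n) :
    (Finset.univ.filter fun j => π j ≤ a).card = a.val + 1 := by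
  have himg : (Finset.univ.filter fun j => π j ≤ a).image π = Finset.Iic a := by
    ext v
    simp only [Finset.mem_image, Finset.mem_filter, Finset.mem_univ, true_and, Finset.mem_Iic]
    exact ⟨fun ⟨j, hj, hjv⟩ => hjv ▸ hj, fun hv => ⟨π.symm v, by simp [hv], by simp⟩⟩
  rw [← Fin.card_Iic a, ← himg, Finset.card_image_of_injective _ π.injective]

lemma cond_of_avoids {n : ℕ} (π : Equiv.Perm (Fin n)) (h132 : Avoids132 π) (h123 : Avoids123 π) :
    ∀ i : Fin n, n ≤ (π i).val + i.val + 2 := by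
  intro i
  by_contra hlt
  push_neg at hlt
  set B1 := Finset.univ.filter (fun j : Fin n => j ≤ i) with hB1def
  set B2 := Finset.univ.filter (fun j : Fin n => π j ≤ π i) with hB2def
  have hB1 : B1.card = i.val + 1 := by
    exact card_filter_apply_le (Equiv.refl (Fin n)) i
  have hB2 : B2.card = (π i).val + 1 := card_filter_apply_le π (π i)
  have hi1 : i ∈ B1 ∩ B2 := by simp [hB1def, hB2def]
  have hone : 1 ≤ (B1 ∩ B2).card := Finset.card_pos.mpr ⟨i, hi1⟩
  have hcu := Finset.card_union_add_card_inter B1 B2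
  have hsub : (Finset.univ \ (B1 ∪ B2)).card
      = (Finset.univ : Finset (Fin n)).card - (B1 ∪ B2).card :=
    Finset.card_sdiff_of_subset (Finset.subset_univ _)
  have huniv : (Finset.univ : Finset (Fin n)).card = n := by simp
  have h2 : 1 < (Finset.univ \ (B1 ∪ B2)).card := by omega
  obtain ⟨j, hj, k, hk, hjk⟩ := Finset.one_lt_card.mp h2
  simp only [Finset.mem_sdiff, Finset.mem_univ, true_and, Finset.mem_union, hB1def, hB2def,
    Finset.mem_filter, not_or, not_le] at hj hk
  obtain ⟨hj1, hj2⟩ := hj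
  obtain ⟨hk1, hk2⟩ := hk
  rcases hjk.lt_or_gt with h | h
  · rcases (π.injective.ne hjk).lt_or_gt with hv | hv
    · exact h123 ⟨i, j, k, hj1, h, hj2, hv⟩
    · exact h132 ⟨i, j, k, hj1, h, hk2, hv⟩
  · rcases (π.injective.ne hjk.symm).lt_or_gt with hv | hv
    · exact h123 ⟨i, k, j, hk1, h, hk2, hv⟩
    · exact h132 ⟨i, k, j, hk1, h, hj2, hv⟩

lemma not_two_above {n : ℕ} (π : Equiv.Perm (Fin n))
    (hc : ∀ i : Fin n, n ≤ (π i).val + i.val + 2)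
    (i j k : Fin n) (hij : i < j) (hjk : j < k) (h1 : π i < π j) (h2 : π i < π k) : False := by
  have hkn := k.isLt
  have hijv : i.val < j.val := hij
  have hjkv : j.val < k.val := hjk
  have hin : i.val + 3 ≤ n := by omega
  set S : Finset (Fin n) := insert j (insert k (Finset.Iic i)) with hSdef
  have hkS : k ∉ Finset.Iic i := by
    simp only [Finset.mem_Iic, Fin.le_def]; omega
  have hjS : j ∉ insert k (Finset.Iic i) := by
    simp only [Finset.mem_insert, Finset.mem_Iic, Fin.le_def, Fin.ext_iff]
    omega
  have hcardS : S.card = i.val + 3 := by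
    rw [hSdef, Finset.card_insert_of_notMem hjS, Finset.card_insert_of_notMem hkS,
      Fin.card_Iic]
  have hmaps : ∀ l ∈ S, (π l).val ∈ Finset.Icc (n - 2 - i.val) (n - 1) := by
    intro l hl
    simp only [hSdef, Finset.mem_insert, Finset.mem_Iic] at hl
    simp only [Finset.mem_Icc]
    refine ⟨?_, by have := (π l).isLt; omega⟩
    have hci := hc i
    rcases hl with rfl | rfl | hle
    · have : (π i).val < (π l).val := h1
      omega
    · have : (π i).val < (π l).val := h2
      omega
    · have hcl := hc l
      have : l.val ≤ i.val := hle
      omega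
  have hinj : Set.InjOn (fun l => (π l).val) S := by
    intro a _ b _ h
    exact π.injective (Fin.ext h)
  have hle := Finset.card_le_card_of_injOn _ hmaps hinj
  rw [hcardS, Nat.card_Icc] at hle
  omega

lemma avoids_iff_Q {n : ℕ} (π : Equiv.Perm (Fin n)) :
    (IsInvolution π ∧ Avoids132 π ∧ Avoids123 π) ↔ Q π := by
  constructor
  · rintro ⟨h1, h2, h3⟩
    exact ⟨h1, cond_of_avoids π h2 h3⟩
  · rintro ⟨h1, h2⟩
    refine ⟨h1, ?_, ?_⟩
    · rintro ⟨i, j, k, hij, hjk, ha, hb⟩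
      exact not_two_above π h2 i j k hij hjk (ha.trans hb) ha
    · rintro ⟨i, j, k, hij, hjk, ha, hb⟩
      exact not_two_above π h2 i j k hij hjk ha (ha.trans hb)



def extFun {m : ℕ} (σ : Equiv.Perm (Fin m)) : Fin (m + 2) → Fin (m + 2) := fun x =>
  if h0 : x.val = 0 then ⟨m + 1, by omega⟩
  else if h1 : x.val = m + 1 then ⟨0, by omega⟩
  else ⟨(σ ⟨x.val - 1, by have := x.isLt; omega⟩).val + 1,
    by have := (σ ⟨x.val - 1, by have := x.isLt; omega⟩).isLt; omega⟩

lemma extFun_val_zero {m : ℕ} (σ : Equiv.Perm (Fin m)) (x : Fin (m + 2)) (h0 : x.val = 0) :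
    (extFun σ x).val = m + 1 := by
  unfold extFun
  rw [dif_pos h0]

lemma extFun_val_top {m : ℕ} (σ : Equiv.Perm (Fin m)) (x : Fin (m + 2))
    (h0 : x.val ≠ 0) (h1 : x.val = m + 1) :
    (extFun σ x).val = 0 := by
  unfold extFun
  rw [dif_neg h0, dif_pos h1]

lemma extFun_val_mid {m : ℕ} (σ : Equiv.Perm (Fin m)) (x : Fin (m + 2))
    (h0 : x.val ≠ 0) (h1 : x.val ≠ m + 1) (i : Fin m) (hix : i.val + 1 = x.val) :
    (extFun σ x).val = (σ i).val + 1 := by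
  have hxlt := x.isLt
  have hm : x.val - 1 < m := by omega
  have h2 : (⟨x.val - 1, hm⟩ : Fin m) = i := Fin.ext (by show x.val - 1 = i.val; omega)
  unfold extFun
  rw [dif_neg h0, dif_neg h1]
  exact congrArg (fun t : Fin m => (σ t).val + 1) h2

lemma extFun_extFun {m : ℕ} (σ : Equiv.Perm (Fin m)) (hσ : ∀ i, σ (σ i) = i) :
    ∀ x, extFun σ (extFun σ x) = x := by
  intro x
  have hxlt := x.isLt
  apply Fin.ext
  by_cases h0 : x.val = 0
  · have v1 := extFun_val_zero σ x h0
    have v2 := extFun_val_top σ (extFun σ x) (by omega) v1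
    omega
  · by_cases h1 : x.val = m + 1
    · have v1 := extFun_val_top σ x h0 h1
      have v2 := extFun_val_zero σ (extFun σ x) v1
      omega
    · have him : x.val - 1 < m := by omega
      set i : Fin m := ⟨x.val - 1, him⟩ with hidef
      have hiv : i.val = x.val - 1 := rfl
      have v1 := extFun_val_mid σ x h0 h1 i (by omega)
      have hσlt := (σ i).isLt
      have v2 := extFun_val_mid σ (extFun σ x) (by omega) (by omega) (σ i) (by omega)
      have v3 : (σ (σ i)).val = i.val := congrArg Fin.val (hσ i)
      omega

def extPerm {m : ℕ} (σ : Equiv.Perm (Fin m)) (hσ : ∀ i, σ (σ i) = i) :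
    Equiv.Perm (Fin (m + 2)) :=
  ⟨extFun σ, extFun σ, extFun_extFun σ hσ, extFun_extFun σ hσ⟩

lemma extPerm_apply {m : ℕ} (σ : Equiv.Perm (Fin m)) (hσ) (x : Fin (m + 2)) :
    extPerm σ hσ x = extFun σ x := rfl

lemma extPerm_zero {m : ℕ} (σ : Equiv.Perm (Fin m)) (hσ) :
    (extPerm σ hσ ⟨0, by omega⟩).val = m + 1 :=
  extFun_val_zero σ _ rfl

lemma extPerm_mid {m : ℕ} (σ : Equiv.Perm (Fin m)) (hσ) (i : Fin m) :
    (extPerm σ hσ ⟨i.val + 1, by have := i.isLt; omega⟩).val = (σ i).val + 1 := by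
  have := i.isLt
  exact extFun_val_mid σ _ (by show i.val + 1 ≠ 0; omega)
    (by show i.val + 1 ≠ m + 1; omega) i rfl

lemma extPerm_cond {m : ℕ} (σ : Equiv.Perm (Fin m)) (hσ)
    (hc : ∀ i : Fin m, m ≤ (σ i).val + i.val + 2) :
    ∀ x : Fin (m + 2), m + 2 ≤ ((extPerm σ hσ) x).val + x.val + 2 := by
  intro x
  have hxlt := x.isLt
  rw [extPerm_apply]
  by_cases h0 : x.val = 0
  · have := extFun_val_zero σ x h0
    omega
  · by_cases h1 : x.val = m + 1
    · have := extFun_val_top σ x h0 h1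
      omega
    · have him : x.val - 1 < m := by omega
      have v1 := extFun_val_mid σ x h0 h1 ⟨x.val - 1, him⟩ (by show x.val - 1 + 1 = x.val; omega)
      have hcc := hc ⟨x.val - 1, him⟩
      have hiv : ((⟨x.val - 1, him⟩ : Fin m)).val = x.val - 1 := rfl
      omega



-- middle values stay in the middle
lemma mid_val {m : ℕ} (π : Equiv.Perm (Fin (m + 2))) (hinv : ∀ i, π (π i) = i)
    (h0 : (π ⟨0, by omega⟩).val = m + 1) (x : Fin (m + 2))
    (hx0 : x.val ≠ 0) (hx1 : x.val ≠ m + 1) :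
    1 ≤ (π x).val ∧ (π x).val ≤ m := by
  have hl := (π x).isLt
  constructor
  · by_contra h
    have hπx : π x = ⟨0, by omega⟩ := Fin.ext (by show (π x).val = 0; omega)
    have hx : x = π ⟨0, by omega⟩ := by rw [← hπx, hinv]
    rw [hx] at hx1
    exact hx1 h0
  · by_contra h
    have hπx : π x = ⟨m + 1, by omega⟩ := Fin.ext (by show (π x).val = m + 1; omega)
    have h0' : π ⟨0, by omega⟩ = ⟨m + 1, by omega⟩ := Fin.ext h0
    have hx : x = (⟨0, by omega⟩ : Fin (m+2)) := π.injective (hπx.trans h0'.symm)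
    rw [hx] at hx0
    exact hx0 rfl

def stripFun {m : ℕ} (π : Equiv.Perm (Fin (m + 2))) : Fin m → Fin m := fun i =>
  ⟨((π ⟨i.val + 1, by have := i.isLt; omega⟩).val - 1) % m,
    Nat.mod_lt _ (by have := i.isLt; omega)⟩

lemma stripFun_val {m : ℕ} (π : Equiv.Perm (Fin (m + 2))) (hinv : ∀ i, π (π i) = i)
    (h0 : (π ⟨0, by omega⟩).val = m + 1) (i : Fin m) :
    (stripFun π i).val = (π ⟨i.val + 1, by have := i.isLt; omega⟩).val - 1 := by
  have hi := i.isLt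
  obtain ⟨ha, hb⟩ := mid_val π hinv h0 ⟨i.val + 1, by omega⟩ (by simp) (by simp; omega)
  simp only [stripFun]
  exact Nat.mod_eq_of_lt (by omega)

lemma stripFun_stripFun {m : ℕ} (π : Equiv.Perm (Fin (m + 2))) (hinv : ∀ i, π (π i) = i)
    (h0 : (π ⟨0, by omega⟩).val = m + 1) :
    ∀ i, stripFun π (stripFun π i) = i := by
  intro i
  have hi := i.isLt
  obtain ⟨ha, hb⟩ := mid_val π hinv h0 ⟨i.val + 1, by omega⟩ (by simp) (by simp; omega)
  apply Fin.ext
  rw [stripFun_val π hinv h0]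
  have hsv : (stripFun π i).val = (π ⟨i.val + 1, by omega⟩).val - 1 :=
    stripFun_val π hinv h0 i
  have hmk : (⟨(stripFun π i).val + 1, by have := (stripFun π i).isLt; omega⟩ : Fin (m+2))
      = π ⟨i.val + 1, by omega⟩ := by
    apply Fin.ext
    show (stripFun π i).val + 1 = _
    omega
  rw [hmk, hinv]
  show i.val + 1 - 1 = i.val
  omega

def stripPerm {m : ℕ} (π : Equiv.Perm (Fin (m + 2))) (hinv : ∀ i, π (π i) = i)
    (h0 : (π ⟨0, by omega⟩).val = m + 1) : Equiv.Perm (Fin m) :=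
  ⟨stripFun π, stripFun π, stripFun_stripFun π hinv h0, stripFun_stripFun π hinv h0⟩

lemma stripPerm_inv {m : ℕ} (π : Equiv.Perm (Fin (m + 2))) (hinv) (h0) :
    ∀ i, (stripPerm π hinv h0) ((stripPerm π hinv h0) i) = i :=
  stripFun_stripFun π hinv h0

lemma stripPerm_cond {m : ℕ} (π : Equiv.Perm (Fin (m + 2))) (hinv) (h0)
    (hc : ∀ x : Fin (m + 2), m + 2 ≤ (π x).val + x.val + 2) :
    ∀ i : Fin m, m ≤ ((stripPerm π hinv h0) i).val + i.val + 2 := by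
  intro i
  have hi := i.isLt
  have h1 : ((stripPerm π hinv h0) i).val
      = (π ⟨i.val + 1, by omega⟩).val - 1 := stripFun_val π hinv h0 i
  obtain ⟨ha, _⟩ := mid_val π hinv h0 ⟨i.val + 1, by omega⟩ (by simp) (by simp; omega)
  have h2 := hc ⟨i.val + 1, by omega⟩
  have h3 : ((⟨i.val + 1, by omega⟩ : Fin (m + 2))).val = i.val + 1 := rfl
  omega



def swp (m : ℕ) : Equiv.Perm (Fin (m + 2)) :=
  Equiv.swap ⟨m, by omega⟩ ⟨m + 1, by omega⟩

lemma swp_val {m : ℕ} (x : Fin (m + 2)) :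
    ((swp m) x).val = if x.val = m then m + 1 else if x.val = m + 1 then m else x.val := by
  rw [swp, Equiv.swap_apply_def]
  split_ifs with h1 h2 h3 h4 h5 <;>
    simp_all [Fin.ext_iff] <;> omega

def conjPerm {m : ℕ} (π : Equiv.Perm (Fin (m + 2))) : Equiv.Perm (Fin (m + 2)) :=
  ((swp m).trans π).trans (swp m)

lemma conjPerm_apply {m : ℕ} (π : Equiv.Perm (Fin (m + 2))) (x : Fin (m + 2)) :
    conjPerm π x = (swp m) (π ((swp m) x)) := rfl

lemma swp_swp {m : ℕ} (x : Fin (m + 2)) : (swp m) ((swp m) x) = x := by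
  simp [swp, Equiv.swap_apply_self]

lemma conjPerm_conjPerm {m : ℕ} (π : Equiv.Perm (Fin (m + 2))) :
    conjPerm (conjPerm π) = π := by
  ext x
  simp [conjPerm_apply, swp_swp]

lemma conjPerm_inv {m : ℕ} (π : Equiv.Perm (Fin (m + 2))) (hinv : ∀ i, π (π i) = i) :
    ∀ x, conjPerm π (conjPerm π x) = x := by
  intro x
  simp [conjPerm_apply, swp_swp, hinv]

lemma conjPerm_cond {m : ℕ} (π : Equiv.Perm (Fin (m + 2)))
    (hc : ∀ x : Fin (m + 2), m + 2 ≤ (π x).val + x.val + 2) :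
    ∀ x : Fin (m + 2), m + 2 ≤ ((conjPerm π) x).val + x.val + 2 := by
  intro x
  have hx := x.isLt
  rw [conjPerm_apply]
  by_cases hxm : m ≤ x.val
  · omega
  · have hsx : (swp m) x = x := by
      apply Fin.ext
      rw [swp_val]
      split_ifs <;> omega
    rw [hsx]
    have h1 := swp_val (π x)
    have h2 := hc x
    split_ifs at h1 <;> omega

lemma conjPerm_zero {m : ℕ} (hm : 1 ≤ m) (π : Equiv.Perm (Fin (m + 2))) :
    ((conjPerm π) ⟨0, by omega⟩).val
      = if (π ⟨0, by omega⟩).val = m then m + 1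
        else if (π ⟨0, by omega⟩).val = m + 1 then m else (π ⟨0, by omega⟩).val := by
  rw [conjPerm_apply]
  have hs0 : (swp m) ⟨0, by omega⟩ = ⟨0, by omega⟩ := by
    apply Fin.ext
    rw [swp_val]
    show (if (0:ℕ) = m then m + 1 else if (0:ℕ) = m + 1 then m else 0) = 0
    split_ifs with hA hB
    · exact absurd hA.symm (by omega)
    · exact hB.elim
    · rfl
  rw [hs0, swp_val]


lemma strip_ext {m : ℕ} (σ : Equiv.Perm (Fin m)) (hσ : ∀ i, σ (σ i) = i)
    (hinv : ∀ i, (extPerm σ hσ) ((extPerm σ hσ) i) = i)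
    (h0 : ((extPerm σ hσ) ⟨0, by omega⟩).val = m + 1) :
    stripPerm (extPerm σ hσ) hinv h0 = σ := by
  apply Equiv.ext
  intro i
  apply Fin.ext
  rw [show (stripPerm (extPerm σ hσ) hinv h0) i = stripFun (extPerm σ hσ) i from rfl]
  rw [stripFun_val _ hinv h0 i, extPerm_mid σ hσ i]
  omega

lemma ext_strip {m : ℕ} (π : Equiv.Perm (Fin (m + 2))) (hinv : ∀ i, π (π i) = i)
    (h0 : (π ⟨0, by omega⟩).val = m + 1) :
    extPerm (stripPerm π hinv h0) (stripPerm_inv π hinv h0) = π := by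
  apply Equiv.ext
  intro x
  have hx := x.isLt
  apply Fin.ext
  rw [extPerm_apply]
  by_cases hx0 : x.val = 0
  · rw [extFun_val_zero _ x hx0]
    have hxe : x = ⟨0, by omega⟩ := Fin.ext hx0
    rw [hxe]
    omega
  · by_cases hx1 : x.val = m + 1
    · rw [extFun_val_top _ x hx0 hx1]
      have hxe : x = ⟨m + 1, by omega⟩ := Fin.ext hx1
      have hπ0 : π ⟨0, by omega⟩ = ⟨m + 1, by omega⟩ := Fin.ext h0
      have hr : π ⟨m + 1, by omega⟩ = ⟨0, by omega⟩ :=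
        (congrArg π hπ0.symm).trans (hinv ⟨0, by omega⟩)
      rw [hxe, hr]
    · have him : x.val - 1 < m := by omega
      have v1 := extFun_val_mid (stripPerm π hinv h0) x hx0 hx1 ⟨x.val - 1, him⟩
        (by show x.val - 1 + 1 = x.val; omega)
      rw [v1]
      have hsv : ((stripPerm π hinv h0) ⟨x.val - 1, him⟩).val
          = (π ⟨(x.val - 1) + 1, by omega⟩).val - 1 := stripFun_val π hinv h0 ⟨x.val - 1, him⟩
      have hxe : (⟨(x.val - 1) + 1, by omega⟩ : Fin (m + 2)) = x := Fin.ext (by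
        show x.val - 1 + 1 = x.val
        omega)
      rw [hxe] at hsv
      obtain ⟨ha, _⟩ := mid_val π hinv h0 x hx0 hx1
      omega

def buildPerm {m : ℕ} (b : Bool) (σ : Equiv.Perm (Fin m)) (hσ : Q σ) :
    Equiv.Perm (Fin (m + 2)) :=
  if b then extPerm σ hσ.1 else conjPerm (extPerm σ hσ.1)

lemma buildPerm_true {m : ℕ} (σ : Equiv.Perm (Fin m)) (hσ : Q σ) :
    buildPerm true σ hσ = extPerm σ hσ.1 := if_pos rfl

lemma buildPerm_false {m : ℕ} (σ : Equiv.Perm (Fin m)) (hσ : Q σ) :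
    buildPerm false σ hσ = conjPerm (extPerm σ hσ.1) := if_neg Bool.false_ne_true

lemma buildPerm_Q {m : ℕ} (b : Bool) (σ : Equiv.Perm (Fin m)) (hσ : Q σ) :
    Q (buildPerm b σ hσ) := by
  cases b
  · rw [buildPerm_false]
    exact ⟨conjPerm_inv _ (extFun_extFun σ hσ.1),
      conjPerm_cond _ (extPerm_cond σ hσ.1 hσ.2)⟩
  · rw [buildPerm_true]
    exact ⟨extFun_extFun σ hσ.1, extPerm_cond σ hσ.1 hσ.2⟩

lemma buildPerm_zero {m : ℕ} (hm : 1 ≤ m) (b : Bool) (σ : Equiv.Perm (Fin m)) (hσ : Q σ) :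
    ((buildPerm b σ hσ) ⟨0, by omega⟩).val = if b then m + 1 else m := by
  cases b
  · rw [buildPerm_false, if_neg Bool.false_ne_true, conjPerm_zero hm, extPerm_zero]
    rw [if_neg (by omega : ¬ m + 1 = m), if_pos rfl]
  · rw [buildPerm_true, if_pos rfl]
    exact extPerm_zero σ hσ.1

lemma step (m : ℕ) (hm : 1 ≤ m) :
    Nat.card {π : Equiv.Perm (Fin (m + 2)) // Q π} =
      2 * Nat.card {σ : Equiv.Perm (Fin m) // Q σ} := by
  classical
  let f : Bool × {σ : Equiv.Perm (Fin m) // Q σ} → {π : Equiv.Perm (Fin (m + 2)) // Q π} :=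
    fun p => ⟨buildPerm p.1 p.2.1 p.2.2, buildPerm_Q p.1 p.2.1 p.2.2⟩
  have hinj : Function.Injective f := by
    rintro ⟨b, σ, hσ⟩ ⟨b', σ', hσ'⟩ h
    have hperm : buildPerm b σ hσ = buildPerm b' σ' hσ' := congrArg Subtype.val h
    have hv : ((buildPerm b σ hσ) ⟨0, by omega⟩).val
        = ((buildPerm b' σ' hσ') ⟨0, by omega⟩).val := by rw [hperm]
    rw [buildPerm_zero hm, buildPerm_zero hm] at hv
    have hb : b = b' := by
      cases b <;> cases b' <;> simp_all
    subst hb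
    have hext : extPerm σ hσ.1 = extPerm σ' hσ'.1 := by
      cases b
      · rw [buildPerm_false, buildPerm_false] at hperm
        have h2 := congrArg conjPerm hperm
        rwa [conjPerm_conjPerm, conjPerm_conjPerm] at h2
      · rwa [buildPerm_true, buildPerm_true] at hperm
    have hσeq : σ = σ' := by
      rw [← strip_ext σ hσ.1 (extFun_extFun σ hσ.1) (extPerm_zero σ hσ.1),
        ← strip_ext σ' hσ'.1 (extFun_extFun σ' hσ'.1) (extPerm_zero σ' hσ'.1)]
      congr 1
    simp only [Prod.mk.injEq, Subtype.mk.injEq]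
    exact ⟨trivial, hσeq⟩
  have hsurj : Function.Surjective f := by
    rintro ⟨π, hπ⟩
    have h0 := hπ.2 ⟨0, by omega⟩
    have h0' : m ≤ (π ⟨0, by omega⟩).val := by
      have hz : ((⟨0, by omega⟩ : Fin (m + 2))).val = 0 := rfl
      omega
    have hlt := (π ⟨0, by omega⟩).isLt
    by_cases hcase : (π ⟨0, by omega⟩).val = m + 1
    · refine ⟨⟨true, stripPerm π hπ.1 hcase,
        stripPerm_inv π hπ.1 hcase, stripPerm_cond π hπ.1 hcase hπ.2⟩, ?_⟩
      apply Subtype.ext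
      show buildPerm true (stripPerm π hπ.1 hcase)
        ⟨stripPerm_inv π hπ.1 hcase, stripPerm_cond π hπ.1 hcase hπ.2⟩ = π
      refine (buildPerm_true _ _).trans ?_
      exact ext_strip π hπ.1 hcase
    · have hc0 : (π ⟨0, by omega⟩).val = m := by omega
      have hπ'inv : ∀ i, (conjPerm π) ((conjPerm π) i) = i := conjPerm_inv π hπ.1
      have hπ'cond : ∀ x : Fin (m + 2), m + 2 ≤ ((conjPerm π) x).val + x.val + 2 :=
        conjPerm_cond π hπ.2
      have hπ'0 : ((conjPerm π) ⟨0, by omega⟩).val = m + 1 := by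
        rw [conjPerm_zero hm, if_pos hc0]
      refine ⟨⟨false, stripPerm (conjPerm π) hπ'inv hπ'0,
        stripPerm_inv _ hπ'inv hπ'0, stripPerm_cond _ hπ'inv hπ'0 hπ'cond⟩, ?_⟩
      apply Subtype.ext
      show buildPerm false (stripPerm (conjPerm π) hπ'inv hπ'0)
        ⟨stripPerm_inv _ hπ'inv hπ'0, stripPerm_cond _ hπ'inv hπ'0 hπ'cond⟩ = π
      refine (buildPerm_false _ _).trans ?_
      have hes : extPerm (stripPerm (conjPerm π) hπ'inv hπ'0)
          (stripPerm_inv _ hπ'inv hπ'0) = conjPerm π := ext_strip (conjPerm π) hπ'inv hπ'0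
      calc conjPerm (extPerm (stripPerm (conjPerm π) hπ'inv hπ'0) _)
          = conjPerm (conjPerm π) := by rw [hes]
        _ = π := conjPerm_conjPerm π
  have hcong := Nat.card_congr (Equiv.ofBijective f ⟨hinj, hsurj⟩)
  rw [← hcong, Nat.card_prod]
  simp [Nat.card_eq_fintype_card]

lemma key : ∀ n : ℕ, Nat.card {π : Equiv.Perm (Fin n) // Q π} = 2 ^ (n / 2) := by
  intro n
  induction n using Nat.strong_induction_on with
  | _ n ih =>
    match n, ih with
    | 0, _ => rw [Nat.card_eq_fintype_card]; decide
    | 1, _ => rw [Nat.card_eq_fintype_card]; decide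
    | 2, _ => rw [Nat.card_eq_fintype_card]; decide
    | (m + 3), ih =>
      have hstep := step (m + 1) (by omega)
      rw [show m + 3 = m + 1 + 2 from rfl]
      rw [hstep, ih (m + 1) (by omega)]
      rw [show (m + 1 + 2) / 2 = (m + 1) / 2 + 1 by omega, pow_succ]
      ring

end Stmt5Aux

theorem stmt5 (n : ℕ) :
    Nat.card {π : Equiv.Perm (Fin n) // IsInvolution π ∧ Avoids132 π ∧ Avoids123 π} =
      2 ^ (n / 2) := by
  rw [Nat.card_congr (Equiv.subtypeEquivRight (fun π => Stmt5Aux.avoids_iff_Q π))]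
  exact Stmt5Aux.key n
end
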